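/- arXiv:1501.01579 — 9 statements merged into one kernel-verified Lean document; each statement's English description precedes it below -/
import Mathlib

section
/- Let (Ω, μ) be a σ-finite measure space, I a finite index set, and for each i ∈ I let p_i : Ω → ℝ be a nonnegative measurable probability density (∫ p_i dμ = 1). Let ω_i ≥ 0 with ∑_{i∈I} ω_i = 1, and assume c := ∫ ∏_{i∈I} p_i(x)^{ω_i} dμ(x) is positive and finite. Define the normalized weighted geometric mean p̄(x) = c^{-1} ∏_{i∈I} p_i(x)^{ω_i}. Then p̄ minimizes the weighted sum of Kullback–Leibler divergences: for every probability density q on (Ω, μ), ∑_{i∈I} ω_i D_KL(p̄ ‖ p_i) ≤ ∑_{i∈I} ω_i D_KL(q ‖ p_i) (with values in [0, ∞]). -/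
open MeasureTheory
open scoped ENNReal Classical

/-- Kullback–Leibler divergence of density `q` from density `p` w.r.t. measure `μ`,
with values in `[0, ∞]`: it is `∞` unless `p` is absolutely continuous w.r.t. `q`
(in the sense that `q x = 0 → p x = 0` a.e.) and the integrand is integrable. -/
noncomputable def klDiv {Ω : Type*} [MeasurableSpace Ω] (μ : Measure Ω)
    (p q : Ω → ℝ) : ℝ≥0∞ :=
  if (∀ᵐ x ∂μ, q x = 0 → p x = 0) ∧
      Integrable (fun x => p x * Real.log (p x / q x)) μ then
    ENNReal.ofReal (∫ x, p x * Real.log (p x / q x) ∂μ)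
  else ⊤

/-!
Write `g = ∏ i, p i ^ ω i` and `c = ∫ g`. For a density `r` that vanishes wherever some `p i`
of positive weight does, the logarithms combine pointwise:
`∑ i, ω i * r * log (r / p i) = r * log (r / g)`. Gibbs' inequality against the normalized
`g / c` gives `∫ r * log (r / g) ≥ -log c`, and at `r = pbar` the integrand is exactly
`-pbar * log c`, so equality holds there. The divergences `D(pbar ‖ p i)` are finite because each
integrand is bounded below by `pbar - p i` while their weighted sum `-pbar * log c` is integrable.
-/

open Real Finset

lemma sub_sub_mul_log_le_mul_log_div {a b c : ℝ} (ha : 0 ≤ a) (hb : 0 ≤ b) (hc : 0 < c)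
    (hab : b = 0 → a = 0) : a - c⁻¹ * b - a * log c ≤ a * log (a / b) := by
  rcases ha.eq_or_lt with rfl | ha
  · simpa using mul_nonneg (inv_nonneg.2 hc.le) hb
  have hb : 0 < b := hb.lt_of_ne fun h => ha.ne' (hab h.symm)
  have key := mul_le_mul_of_nonneg_left
    (one_sub_inv_le_log_of_pos (by positivity : 0 < c * a / b)) ha.le
  rw [log_div (by positivity) hb.ne', log_mul hc.ne' ha.ne'] at key
  rw [log_div ha.ne' hb.ne']
  field_simp at key ⊢
  linarith

lemma inv_mul_mul_log_inv_mul_div (b c : ℝ) :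
    c⁻¹ * b * log (c⁻¹ * b / b) = -(c⁻¹ * b * log c) := by
  rcases eq_or_ne b 0 with rfl | hb
  · simp
  · rw [mul_div_assoc, div_self hb, mul_one, log_inv, mul_neg]

lemma prod_rpow_eq_zero_iff {ι : Type*} [Fintype ι] {a w : ι → ℝ} (ha : ∀ i, 0 ≤ a i)
    (hw : ∀ i, 0 ≤ w i) : ∏ i, a i ^ w i = 0 ↔ ∃ i, 0 < w i ∧ a i = 0 := by
  simp [prod_eq_zero_iff, rpow_eq_zero_iff_of_nonneg (ha _), (hw _).lt_iff_ne', and_comm]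

lemma sum_mul_mul_log_div_eq_mul_log_div_prod_rpow {ι : Type*} [Fintype ι] {w a : ι → ℝ}
    {r : ℝ} (hw : ∀ i, 0 ≤ w i) (hw1 : ∑ i, w i = 1) (ha : ∀ i, 0 ≤ a i) (hr : 0 ≤ r)
    (hra : ∀ i, 0 < w i → a i = 0 → r = 0) :
    ∑ i, w i * (r * log (r / a i)) = r * log (r / ∏ i, a i ^ w i) := by
  rcases hr.eq_or_lt with rfl | hr
  · simp
  have hpos : ∀ i, 0 < w i → 0 < a i := fun i hi =>
    (ha i).lt_of_ne fun h => hr.ne' (hra i hi h.symm)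
  have hfactor : ∀ i, 0 < a i ^ w i := fun i => by
    rcases (hw i).eq_or_lt with h | h
    · simp [← h]
    · exact rpow_pos_of_pos (hpos i h) _
  have hterm : ∀ i, w i * log (r / a i) = w i * log r - log (a i ^ w i) := fun i => by
    rcases (hw i).eq_or_lt with h | h
    · simp [← h]
    · rw [log_div hr.ne' (hpos i h).ne', log_rpow (hpos i h)]; ring
  rw [log_div hr.ne' (prod_pos fun i _ => hfactor i).ne', log_prod fun i _ => (hfactor i).ne']
  calc ∑ i, w i * (r * log (r / a i)) = r * ∑ i, w i * log (r / a i) := by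
        rw [mul_sum]; congr 1; ext i; ring
    _ = r * (log r - ∑ i, log (a i ^ w i)) := by
        simp_rw [hterm]; rw [sum_sub_distrib, ← sum_mul, hw1, one_mul]

section

variable {Ω : Type*} [MeasurableSpace Ω] {μ : Measure Ω}

lemma klDiv_ne_top_iff {p q : Ω → ℝ} :
    klDiv μ p q ≠ ⊤ ↔
      (∀ᵐ x ∂μ, q x = 0 → p x = 0) ∧ Integrable (fun x => p x * log (p x / q x)) μ := by
  unfold klDiv; split_ifs with h <;> simp [h]

lemma klDiv_eq_ofReal_of_ne_top {p q : Ω → ℝ} (h : klDiv μ p q ≠ ⊤) :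
    klDiv μ p q = ENNReal.ofReal (∫ x, p x * log (p x / q x) ∂μ) := by
  rw [klDiv, if_pos (klDiv_ne_top_iff.1 h)]

lemma neg_log_integral_le_integral_mul_log_div {r g : Ω → ℝ} (hr : ∀ x, 0 ≤ r x)
    (hr1 : ∫ x, r x ∂μ = 1) (hg : ∀ x, 0 ≤ g x) (hgi : Integrable g μ)
    (hc : 0 < ∫ x, g x ∂μ) (hac : ∀ᵐ x ∂μ, g x = 0 → r x = 0)
    (hint : Integrable (fun x => r x * log (r x / g x)) μ) :
    -log (∫ x, g x ∂μ) ≤ ∫ x, r x * log (r x / g x) ∂μ := by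
  set c := ∫ x, g x ∂μ
  have hri : Integrable r μ := .of_integral_ne_zero (by simp [hr1])
  have hdiff : Integrable (fun x => r x - c⁻¹ * g x) μ := hri.sub (hgi.const_mul _)
  have hlow : Integrable (fun x => r x - c⁻¹ * g x - r x * log c) μ :=
    hdiff.sub (hri.mul_const _)
  calc -log c = ∫ x, (r x - c⁻¹ * g x - r x * log c) ∂μ := by
        rw [integral_sub hdiff (hri.mul_const _),
          integral_sub hri (hgi.const_mul _), integral_const_mul, integral_mul_const, hr1,
          inv_mul_cancel₀ hc.ne']
        ring
    _ ≤ ∫ x, r x * log (r x / g x) ∂μ := integral_mono_ae hlow hint <| by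
        filter_upwards [hac] with x hx using sub_sub_mul_log_le_mul_log_div (hr x) (hg x) hc hx

lemma integral_mul_log_div_nonneg_of_klDiv_ne_top {p q : Ω → ℝ} (hp : ∀ x, 0 ≤ p x)
    (hp1 : ∫ x, p x ∂μ = 1) (hq : ∀ x, 0 ≤ q x) (hq1 : ∫ x, q x ∂μ = 1)
    (h : klDiv μ p q ≠ ⊤) : 0 ≤ ∫ x, p x * log (p x / q x) ∂μ := by
  obtain ⟨hac, hint⟩ := klDiv_ne_top_iff.1 h
  simpa [hq1] using neg_log_integral_le_integral_mul_log_div hp hp1 hq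
    (.of_integral_ne_zero (by simp [hq1])) (by simp [hq1]) hac hint

end

section

variable {Ω : Type*} [MeasurableSpace Ω] {μ : Measure Ω} {ι : Type*} {w : ι → ℝ}
  {p : ι → Ω → ℝ} {r : Ω → ℝ}

lemma ae_forall_imp_of_klDiv_ne_top [Countable ι]
    (hfin : ∀ i, 0 < w i → klDiv μ r (p i) ≠ ⊤) :
    ∀ᵐ x ∂μ, ∀ i, 0 < w i → p i x = 0 → r x = 0 := by
  refine ae_all_iff.2 fun i => ?_
  by_cases hi : 0 < w i
  · filter_upwards [(klDiv_ne_top_iff.1 (hfin i hi)).1] with x hx using fun _ => hx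
  · exact .of_forall fun x h => absurd h hi

lemma integrable_mul_mul_log_div_of_klDiv_ne_top (hw : ∀ i, 0 ≤ w i)
    (hfin : ∀ i, 0 < w i → klDiv μ r (p i) ≠ ⊤) (i : ι) :
    Integrable (fun x => w i * (r x * log (r x / p i x))) μ := by
  rcases (hw i).eq_or_lt with h | h
  · simp [← h]
  · exact (klDiv_ne_top_iff.1 (hfin i h)).2.const_mul _

variable [Fintype ι]

lemma integrable_of_integrable_weighted_sum {f l : ι → Ω → ℝ} (hw : ∀ j, 0 ≤ w j)
    (hl : ∀ j, Integrable (l j) μ) (hlf : ∀ᵐ x ∂μ, ∀ j, 0 < w j → l j x ≤ f j x)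
    (hsum : Integrable (fun x => ∑ j, w j * f j x) μ) {i : ι} (hi : 0 < w i)
    (hf : AEStronglyMeasurable (f i) μ) : Integrable (f i) μ := by
  have hlsum : Integrable (fun x => ∑ j, w j * l j x) μ :=
    integrable_finsetSum _ fun j _ => (hl j).const_mul _
  refine integrable_of_le_of_le hf (hlf.mono fun x hx => hx i hi) ?_ (hl i)
    (((hsum.sub hlsum).const_mul (w i)⁻¹).add (hl i))
  filter_upwards [hlf] with x hx
  have hgap : w i * (f i x - l i x) ≤ ∑ j, w j * f j x - ∑ j, w j * l j x := by
    rw [← sum_sub_distrib]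
    simp_rw [← mul_sub]
    refine single_le_sum (f := fun j => w j * (f j x - l j x)) (fun j _ => ?_) (mem_univ i)
    rcases (hw j).eq_or_lt with h | h
    · simp [← h]
    · exact mul_nonneg h.le (sub_nonneg.2 (hx j h))
  simpa [sub_le_iff_le_add] using (le_inv_mul_iff₀ hi).2 hgap

lemma ae_sum_mul_mul_log_div_eq (hw : ∀ i, 0 ≤ w i) (hw1 : ∑ i, w i = 1)
    (hp : ∀ i x, 0 ≤ p i x) (hr : ∀ x, 0 ≤ r x)
    (hac : ∀ᵐ x ∂μ, ∀ i, 0 < w i → p i x = 0 → r x = 0) :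
    ∀ᵐ x ∂μ, ∑ i, w i * (r x * log (r x / p i x)) =
      r x * log (r x / ∏ i, p i x ^ w i) := by
  filter_upwards [hac] with x hx
  exact sum_mul_mul_log_div_eq_mul_log_div_prod_rpow hw hw1 (fun i => hp i x) (hr x) hx

lemma integrable_mul_log_div_prod_rpow (hw : ∀ i, 0 ≤ w i) (hw1 : ∑ i, w i = 1)
    (hp : ∀ i x, 0 ≤ p i x) (hr : ∀ x, 0 ≤ r x)
    (hfin : ∀ i, 0 < w i → klDiv μ r (p i) ≠ ⊤) :
    Integrable (fun x => r x * log (r x / ∏ i, p i x ^ w i)) μ :=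
  (integrable_finsetSum _ fun i _ => integrable_mul_mul_log_div_of_klDiv_ne_top hw hfin i).congr
    (ae_sum_mul_mul_log_div_eq hw hw1 hp hr (ae_forall_imp_of_klDiv_ne_top hfin))

lemma sum_mul_integral_mul_log_div_eq (hw : ∀ i, 0 ≤ w i) (hw1 : ∑ i, w i = 1)
    (hp : ∀ i x, 0 ≤ p i x) (hr : ∀ x, 0 ≤ r x)
    (hfin : ∀ i, 0 < w i → klDiv μ r (p i) ≠ ⊤) :
    ∑ i, w i * ∫ x, r x * log (r x / p i x) ∂μ =
      ∫ x, r x * log (r x / ∏ i, p i x ^ w i) ∂μ := by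
  simp_rw [← integral_const_mul]
  rw [← integral_finsetSum _ fun i _ => integrable_mul_mul_log_div_of_klDiv_ne_top hw hfin i]
  exact integral_congr_ae
    (ae_sum_mul_mul_log_div_eq hw hw1 hp hr (ae_forall_imp_of_klDiv_ne_top hfin))

lemma klDiv_ne_top_of_integrable_weighted_sum (hw : ∀ i, 0 ≤ w i)
    (hp : ∀ i x, 0 ≤ p i x) (hpi : ∀ i, Integrable (p i) μ) (hr : ∀ x, 0 ≤ r x)
    (hri : Integrable r μ)
    (hac : ∀ᵐ x ∂μ, ∀ i, 0 < w i → p i x = 0 → r x = 0)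
    (hsum : Integrable (fun x => ∑ i, w i * (r x * log (r x / p i x))) μ) {i : ι}
    (hi : 0 < w i) : klDiv μ r (p i) ≠ ⊤ := by
  refine klDiv_ne_top_iff.2 ⟨hac.mono fun x hx => hx i hi, ?_⟩
  refine integrable_of_integrable_weighted_sum (l := fun j x => r x - p j x) hw
    (fun j => hri.sub (hpi j)) ?_ hsum hi ?_
  · filter_upwards [hac] with x hx j hj
    simpa using sub_sub_mul_log_le_mul_log_div (hr x) (hp j x) one_pos (hx j hj)
  · have hr' := hri.aemeasurable
    have hp' := (hpi i).aemeasurable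
    exact (hr'.mul (measurable_log.comp_aemeasurable (hr'.div hp'))).aestronglyMeasurable

lemma sum_ofReal_mul_klDiv_eq (hw : ∀ i, 0 ≤ w i) (hp : ∀ i x, 0 ≤ p i x)
    (hp1 : ∀ i, ∫ x, p i x ∂μ = 1) (hr : ∀ x, 0 ≤ r x) (hr1 : ∫ x, r x ∂μ = 1)
    (hfin : ∀ i, 0 < w i → klDiv μ r (p i) ≠ ⊤) :
    ∑ i, ENNReal.ofReal (w i) * klDiv μ r (p i) =
      ENNReal.ofReal (∑ i, w i * ∫ x, r x * log (r x / p i x) ∂μ) := by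
  have hterm : ∀ i, 0 ≤ w i * ∫ x, r x * log (r x / p i x) ∂μ ∧
      ENNReal.ofReal (w i) * klDiv μ r (p i) =
        ENNReal.ofReal (w i * ∫ x, r x * log (r x / p i x) ∂μ) := fun i => by
    rcases (hw i).eq_or_lt with h | h
    · simp [← h]
    · have hnn := integral_mul_log_div_nonneg_of_klDiv_ne_top hr hr1 (hp i) (hp1 i) (hfin i h)
      exact ⟨mul_nonneg h.le hnn,
        by rw [klDiv_eq_ofReal_of_ne_top (hfin i h), ENNReal.ofReal_mul h.le]⟩
  rw [ENNReal.ofReal_sum_of_nonneg fun i _ => (hterm i).1]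
  exact sum_congr rfl fun i _ => (hterm i).2

lemma sum_ofReal_mul_klDiv_eq_ofReal_neg_log (hw : ∀ i, 0 ≤ w i) (hw1 : ∑ i, w i = 1)
    (hp : ∀ i x, 0 ≤ p i x) (hp1 : ∀ i, ∫ x, p i x ∂μ = 1)
    (hc_pos : 0 < ∫ x, ∏ i, p i x ^ w i ∂μ)
    (hc_fin : Integrable (fun x => ∏ i, p i x ^ w i) μ)
    {pbar : Ω → ℝ}
    (hpbar : pbar = fun x => (∫ y, ∏ i, p i y ^ w i ∂μ)⁻¹ * ∏ i, p i x ^ w i) :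
    ∑ i, ENNReal.ofReal (w i) * klDiv μ pbar (p i) =
      ENNReal.ofReal (-log (∫ x, ∏ i, p i x ^ w i ∂μ)) := by
  set c := ∫ x, ∏ i, p i x ^ w i ∂μ
  have hpbar_apply x : pbar x = c⁻¹ * ∏ i, p i x ^ w i := by rw [hpbar]
  have hpbar_nn x : 0 ≤ pbar x := hpbar_apply x ▸
    mul_nonneg (inv_nonneg.2 hc_pos.le) (prod_nonneg fun i _ => rpow_nonneg (hp i x) _)
  have hpbar_int : Integrable pbar μ := hpbar ▸ hc_fin.const_mul _
  have hpbar_one : ∫ x, pbar x ∂μ = 1 := by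
    simp_rw [hpbar_apply]; rw [integral_const_mul, inv_mul_cancel₀ hc_pos.ne']
  have hpbar_log x : pbar x * log (pbar x / ∏ i, p i x ^ w i) = -(pbar x * log c) := by
    rw [hpbar_apply]; exact inv_mul_mul_log_inv_mul_div _ _
  have hpbar_ac : ∀ᵐ x ∂μ, ∀ i, 0 < w i → p i x = 0 → pbar x = 0 :=
    .of_forall fun x i hi h => by
      rw [hpbar_apply, (prod_rpow_eq_zero_iff (hp · x) hw).2 ⟨i, hi, h⟩, mul_zero]
  have hsum_log := ae_sum_mul_mul_log_div_eq hw hw1 hp hpbar_nn hpbar_ac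
  have hpbar_fin : ∀ i, 0 < w i → klDiv μ pbar (p i) ≠ ⊤ := fun i hi =>
    klDiv_ne_top_of_integrable_weighted_sum hw hp
      (fun j => .of_integral_ne_zero (by simp [hp1])) hpbar_nn hpbar_int hpbar_ac
      ((hpbar_int.mul_const (log c)).neg.congr <| by
        filter_upwards [hsum_log] with x hx
        rw [hx, hpbar_log]; rfl) hi
  rw [sum_ofReal_mul_klDiv_eq hw hp hp1 hpbar_nn hpbar_one hpbar_fin,
    sum_mul_integral_mul_log_div_eq hw hw1 hp hpbar_nn hpbar_fin]
  simp_rw [hpbar_log]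
  rw [integral_neg, integral_mul_const, hpbar_one, one_mul]

lemma ofReal_neg_log_le_sum_ofReal_mul_klDiv (hw : ∀ i, 0 ≤ w i) (hw1 : ∑ i, w i = 1)
    (hp : ∀ i x, 0 ≤ p i x) (hp1 : ∀ i, ∫ x, p i x ∂μ = 1)
    (hc_pos : 0 < ∫ x, ∏ i, p i x ^ w i ∂μ)
    (hc_fin : Integrable (fun x => ∏ i, p i x ^ w i) μ)
    (hr : ∀ x, 0 ≤ r x) (hr1 : ∫ x, r x ∂μ = 1) :
    ENNReal.ofReal (-log (∫ x, ∏ i, p i x ^ w i ∂μ)) ≤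
      ∑ i, ENNReal.ofReal (w i) * klDiv μ r (p i) := by
  by_cases hfin : ∀ i, 0 < w i → klDiv μ r (p i) ≠ ⊤
  · rw [sum_ofReal_mul_klDiv_eq hw hp hp1 hr hr1 hfin,
      sum_mul_integral_mul_log_div_eq hw hw1 hp hr hfin]
    refine ENNReal.ofReal_le_ofReal (neg_log_integral_le_integral_mul_log_div hr hr1
      (fun x => prod_nonneg fun i _ => rpow_nonneg (hp i x) _) hc_fin hc_pos ?_
      (integrable_mul_log_div_prod_rpow hw hw1 hp hr hfin))
    filter_upwards [ae_forall_imp_of_klDiv_ne_top hfin] with x hx hgx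
    obtain ⟨i, hi, hpi⟩ := (prod_rpow_eq_zero_iff (hp · x) hw).1 hgx
    exact hx i hi hpi
  · push Not at hfin
    obtain ⟨i, hi, hr_top⟩ := hfin
    have : ∑ i, ENNReal.ofReal (w i) * klDiv μ r (p i) = ⊤ :=
      ENNReal.sum_eq_top.2 ⟨i, mem_univ i, by simp [hr_top, hi]⟩
    exact this ▸ le_top

end

theorem kla_minimizes_weighted_klDiv_general
    {Ω : Type*} [MeasurableSpace Ω] (μ : Measure Ω)
    {I : Type*} [Fintype I]
    (p : I → Ω → ℝ)
    (hpnn : ∀ i x, 0 ≤ p i x)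
    (hpnorm : ∀ i, ∫ x, p i x ∂μ = 1)
    (ω : I → ℝ) (hωnn : ∀ i, 0 ≤ ω i) (hωsum : ∑ i, ω i = 1)
    (hc_pos : 0 < ∫ x, ∏ i, p i x ^ ω i ∂μ)
    (hc_fin : Integrable (fun x => ∏ i, p i x ^ ω i) μ)
    (pbar : Ω → ℝ)
    (hpbar : pbar = fun x => (∫ y, ∏ i, p i y ^ ω i ∂μ)⁻¹ * ∏ i, p i x ^ ω i)
    (q : Ω → ℝ)
    (hqnn : ∀ x, 0 ≤ q x) (hqnorm : ∫ x, q x ∂μ = 1) :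
    ∑ i, ENNReal.ofReal (ω i) * klDiv μ pbar (p i) ≤
      ∑ i, ENNReal.ofReal (ω i) * klDiv μ q (p i) :=
  (sum_ofReal_mul_klDiv_eq_ofReal_neg_log hωnn hωsum hpnn hpnorm hc_pos hc_fin hpbar).trans_le
    (ofReal_neg_log_le_sum_ofReal_mul_klDiv hωnn hωsum hpnn hpnorm hc_pos hc_fin hqnn hqnorm)

/-- The normalized weighted geometric mean of probability densities minimizes the
weighted sum of Kullback–Leibler divergences. -/
theorem kla_minimizes_weighted_klDiv
    {Ω : Type*} [MeasurableSpace Ω] (μ : Measure Ω) [SigmaFinite μ]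
    {I : Type*} [Fintype I]
    (p : I → Ω → ℝ)
    (hpmeas : ∀ i, Measurable (p i))
    (hpnn : ∀ i x, 0 ≤ p i x)
    (hpnorm : ∀ i, ∫ x, p i x ∂μ = 1)
    (ω : I → ℝ) (hωnn : ∀ i, 0 ≤ ω i) (hωsum : ∑ i, ω i = 1)
    (hc_pos : 0 < ∫ x, ∏ i, p i x ^ ω i ∂μ)
    (hc_fin : Integrable (fun x => ∏ i, p i x ^ ω i) μ)
    (pbar : Ω → ℝ)
    (hpbar : pbar = fun x => (∫ y, ∏ i, p i y ^ ω i ∂μ)⁻¹ * ∏ i, p i x ^ ω i)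
    (q : Ω → ℝ)
    (hqmeas : Measurable q) (hqnn : ∀ x, 0 ≤ q x) (hqnorm : ∫ x, q x ∂μ = 1) :
    ∑ i, ENNReal.ofReal (ω i) * klDiv μ pbar (p i) ≤
      ∑ i, ENNReal.ofReal (ω i) * klDiv μ q (p i) :=
  kla_minimizes_weighted_klDiv_general μ p hpnn hpnorm ω hωnn hωsum hc_pos hc_fin pbar hpbar q hqnn
    hqnorm
end

section
/- (Closure of Mδ-GLMB densities under Kullback–Leibler averaging.) For each i in a finite index set I, let π_i be the Mδ-GLMB density with parameter set {(w_i(L), p_i(·, ℓ; L))}_{L ⊆ 𝕃}, where each p_i(·, ℓ; L) is strictly positive, and let ω_i ≥ 0 with ∑_{i∈I} ω_i = 1. Define η^{(L)}(ℓ) = ∫_X ∏_{i∈I} p_i(x, ℓ; L)^{ω_i} dμ(x), assume 0 < η^{(L)}(ℓ) < ∞ for all ℓ ∈ L ⊆ 𝕃, assume the normalizer D := ∑_{J ⊆ 𝕃} ∏_{i∈I} w_i(J)^{ω_i} ∏_{ℓ∈J} η^{(J)}(ℓ) is positive, and define w̄(L) = D^{-1} ∏_{i∈I} w_i(L)^{ω_i}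 ∏_{ℓ∈L} η^{(L)}(ℓ) and p̄(x, ℓ; L) = η^{(L)}(ℓ)^{-1} ∏_{i∈I} p_i(x, ℓ; L)^{ω_i}. Then the normalized weighted geometric mean of the π_i is exactly the Mδ-GLMB density with parameter set {(w̄(L), p̄(·, ℓ; L))}_{L ⊆ 𝕃}: for every L ⊆ 𝕃 and x ∈ X^L, ∏_{i∈I} π_i(L, x)^{ω_i} / (∑_{J ⊆ 𝕃} ∫_{X^J} ∏_{i∈I} π_i(J, y)^{ω_i} dμ^J(y)) = w̄(L) ∏_{ℓ∈L} p̄(x_ℓ, ℓ; L). -/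
/-!
A weighted geometric mean of Mδ-GLMB densities is again of Mδ-GLMB form, with weight
`∏ᵢ wᵢ(L)^ωᵢ` and single-object factors `∏ᵢ pᵢ(·, ℓ; L)^ωᵢ`. Its integral over `X^J` therefore
splits by Fubini into `∏ᵢ wᵢ(J)^ωᵢ ∏_{ℓ ∈ J} η^{(J)}(ℓ)`, so the normalizer is `D`; moving the
factors `η^{(L)}(ℓ)` from the single-object factors into the weight yields `w̄` and `p̄`.
-/

open MeasureTheory

def mdglmb {X 𝕃 : Type*} (w : Finset 𝕃 → ℝ) (p : X → 𝕃 → Finset 𝕃 → ℝ)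
    (L : Finset 𝕃) (x : L → X) : ℝ :=
  w L * ∏ ℓ : L, p (x ℓ) ℓ L

section

variable {X 𝕃 : Type*}

theorem Real.prod_rpow_mul_prod {ι κ : Type*} [Fintype ι] [Fintype κ] {a : ι → ℝ}
    {f : ι → κ → ℝ} (ha : ∀ i, 0 ≤ a i) (hf : ∀ i k, 0 ≤ f i k) (r : ι → ℝ) :
    ∏ i, (a i * ∏ k, f i k) ^ r i = (∏ i, a i ^ r i) * ∏ k, ∏ i, f i k ^ r i := by
  have hsplit : ∀ i, (a i * ∏ k, f i k) ^ r i = a i ^ r i * ∏ k, f i k ^ r i := fun i => by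
    rw [Real.mul_rpow (ha i) (Finset.prod_nonneg fun k _ => hf i k),
      Real.finsetProd_rpow _ _ fun k _ => hf i k]
  simp_rw [hsplit, Finset.prod_mul_distrib]
  rw [Finset.prod_comm]

theorem prod_mdglmb_rpow {I : Type*} [Fintype I] {w : I → Finset 𝕃 → ℝ}
    {p : I → X → 𝕃 → Finset 𝕃 → ℝ} (hw : ∀ i L, 0 ≤ w i L) (hp : ∀ i x ℓ L, 0 ≤ p i x ℓ L)
    (ω : I → ℝ) (L : Finset 𝕃) (x : L → X) :
    ∏ i, mdglmb (w i) (p i) L x ^ ω i =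
      mdglmb (fun L => ∏ i, w i L ^ ω i) (fun x ℓ L => ∏ i, p i x ℓ L ^ ω i) L x :=
  Real.prod_rpow_mul_prod (fun i => hw i L) (fun i ℓ => hp i (x ℓ) ℓ L) ω

theorem integral_mdglmb [MeasurableSpace X] (μ : Measure X) [SigmaFinite μ]
    (w : Finset 𝕃 → ℝ) (p : X → 𝕃 → Finset 𝕃 → ℝ) (L : Finset 𝕃) :
    ∫ x, mdglmb w p L x ∂(Measure.pi fun _ : L => μ) = w L * ∏ ℓ : L, ∫ x, p x ℓ L ∂μ := by
  unfold mdglmb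
  rw [integral_const_mul, integral_fintype_prod_eq_prod (fun (ℓ : L) (x : X) => p x ℓ L)]

theorem mdglmb_rescale (w : Finset 𝕃 → ℝ) (p : X → 𝕃 → Finset 𝕃 → ℝ) (c : ℝ)
    {η : Finset 𝕃 → 𝕃 → ℝ} {L : Finset 𝕃} (hη : ∀ ℓ ∈ L, η L ℓ ≠ 0) (x : L → X) :
    mdglmb (fun L => c * (w L * ∏ ℓ : L, η L ℓ)) (fun x ℓ L => (η L ℓ)⁻¹ * p x ℓ L) L x =
      c * mdglmb w p L x := by
  have hcancel : (∏ ℓ : L, η L ℓ) * ∏ ℓ : L, (η L ℓ)⁻¹ = 1 := by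
    rw [← Finset.prod_mul_distrib]
    exact Finset.prod_eq_one fun ℓ _ => mul_inv_cancel₀ (hη ℓ ℓ.2)
  simp only [mdglmb, Finset.prod_mul_distrib]
  linear_combination c * w L * (∏ ℓ : L, p (x ℓ) ℓ L) * hcancel

end

theorem mdglmb_closed_under_kla_general
    {X : Type*} [MeasurableSpace X] (μ : Measure X) [SigmaFinite μ]
    {𝕃 : Type*} [Fintype 𝕃]
    {I : Type*} [Fintype I]
    (w : I → Finset 𝕃 → ℝ) (p : I → X → 𝕃 → Finset 𝕃 → ℝ)
    (hwnn : ∀ i L, 0 ≤ w i L)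
    (hppos : ∀ i x ℓ L, 0 < p i x ℓ L)
    (ω : I → ℝ)
    (η : Finset 𝕃 → 𝕃 → ℝ)
    (hη : ∀ L ℓ, η L ℓ = ∫ x, ∏ i, p i x ℓ L ^ ω i ∂μ)
    (hηpos : ∀ L : Finset 𝕃, ∀ ℓ ∈ L, 0 < η L ℓ)
    (D : ℝ)
    (hD : D = ∑ J : Finset 𝕃, (∏ i, w i J ^ ω i) * ∏ ℓ : J, η J ℓ)
    (wbar : Finset 𝕃 → ℝ) (pbar : X → 𝕃 → Finset 𝕃 → ℝ)
    (hwbar : ∀ L, wbar L = D⁻¹ * ((∏ i, w i L ^ ω i) * ∏ ℓ : L, η L ℓ))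
    (hpbar : ∀ x ℓ L, pbar x ℓ L = (η L ℓ)⁻¹ * ∏ i, p i x ℓ L ^ ω i) :
    ∀ (L : Finset 𝕃) (x : (↥L) → X),
      (∏ i, (w i L * ∏ ℓ : L, p i (x ℓ) ℓ L) ^ ω i) /
        (∑ J : Finset 𝕃,
          ∫ y, ∏ i, (w i J * ∏ ℓ : J, p i (y ℓ) ℓ J) ^ ω i
            ∂(Measure.pi fun _ : J => μ)) =
      wbar L * ∏ ℓ : L, pbar (x ℓ) ℓ L := by
  intro L x
  have hgeom := prod_mdglmb_rpow hwnn (fun i x ℓ L => (hppos i x ℓ L).le) ω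
  have hnorm : ∑ J : Finset 𝕃, ∫ y, ∏ i, mdglmb (w i) (p i) J y ^ ω i
      ∂(Measure.pi fun _ : J => μ) = D := by
    simp_rw [hgeom, integral_mdglmb, ← hη, hD]
  have hpbar' : pbar = fun x ℓ L => (η L ℓ)⁻¹ * ∏ i, p i x ℓ L ^ ω i := by
    funext x ℓ L; exact hpbar x ℓ L
  change (∏ i, mdglmb (w i) (p i) L x ^ ω i) /
    (∑ J : Finset 𝕃, ∫ y, ∏ i, mdglmb (w i) (p i) J y ^ ω i ∂(Measure.pi fun _ : J => μ)) =
      mdglmb wbar pbar L x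
  rw [hnorm, hgeom, funext hwbar, hpbar', mdglmb_rescale _ _ _ fun ℓ hℓ => (hηpos L ℓ hℓ).ne',
    div_eq_inv_mul]

/-- Closure of Mδ-GLMB densities under Kullback–Leibler averaging: the normalized
weighted geometric mean of Mδ-GLMB densities with parameters `{(w i L, p i · ℓ L)}`
is the Mδ-GLMB density with parameters `{(w̄ L, p̄ · ℓ L)}`. -/
theorem mdglmb_closed_under_kla
    {X : Type*} [MeasurableSpace X] (μ : Measure X) [SigmaFinite μ]
    {𝕃 : Type*} [Fintype 𝕃]
    {I : Type*} [Fintype I]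
    (w : I → Finset 𝕃 → ℝ) (p : I → X → 𝕃 → Finset 𝕃 → ℝ)
    (hwnn : ∀ i L, 0 ≤ w i L) (hwsum : ∀ i, ∑ L : Finset 𝕃, w i L = 1)
    (hpmeas : ∀ i ℓ L, Measurable (fun x => p i x ℓ L))
    (hppos : ∀ i x ℓ L, 0 < p i x ℓ L)
    (hpnorm : ∀ i ℓ L, ∫ x, p i x ℓ L ∂μ = 1)
    (ω : I → ℝ) (hωnn : ∀ i, 0 ≤ ω i) (hωsum : ∑ i, ω i = 1)
    (η : Finset 𝕃 → 𝕃 → ℝ)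
    (hη : ∀ L ℓ, η L ℓ = ∫ x, ∏ i, p i x ℓ L ^ ω i ∂μ)
    (hηpos : ∀ L : Finset 𝕃, ∀ ℓ ∈ L, 0 < η L ℓ)
    (hηfin : ∀ L : Finset 𝕃, ∀ ℓ ∈ L, Integrable (fun x => ∏ i, p i x ℓ L ^ ω i) μ)
    (D : ℝ)
    (hD : D = ∑ J : Finset 𝕃, (∏ i, w i J ^ ω i) * ∏ ℓ : J, η J ℓ)
    (hDpos : 0 < D)
    (wbar : Finset 𝕃 → ℝ) (pbar : X → 𝕃 → Finset 𝕃 → ℝ)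
    (hwbar : ∀ L, wbar L = D⁻¹ * ((∏ i, w i L ^ ω i) * ∏ ℓ : L, η L ℓ))
    (hpbar : ∀ x ℓ L, pbar x ℓ L = (η L ℓ)⁻¹ * ∏ i, p i x ℓ L ^ ω i) :
    ∀ (L : Finset 𝕃) (x : (↥L) → X),
      (∏ i, (w i L * ∏ ℓ : L, p i (x ℓ) ℓ L) ^ ω i) /
        (∑ J : Finset 𝕃,
          ∫ y, ∏ i, (w i J * ∏ ℓ : J, p i (y ℓ) ℓ J) ^ ω i
            ∂(Measure.pi fun _ : J => μ)) =
      wbar L * ∏ ℓ : L, pbar (x ℓ) ℓ L :=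
  mdglmb_closed_under_kla_general μ w p hwnn hppos ω η hη hηpos D hD wbar pbar hwbar hpbar
end

section
/- With the notation and hypotheses of the Mδ-GLMB fusion setting (Mδ-GLMB densities π_i with parameters {(w_i(L), p_i(·, ℓ; L))}, positive weights ω_i summing to 1, and η^{(L)}(ℓ) = ∫_X ∏_{i∈I} p_i(x, ℓ; L)^{ω_i} dμ(x) finite), the set integral of the weighted geometric product equals ∑_{L ⊆ 𝕃} ∫_{X^L} ∏_{i∈I} π_i(L, x)^{ω_i} dμ^L(x) = ∑_{J ⊆ 𝕃} ∏_{i∈I} w_i(J)^{ω_i} ∏_{ℓ∈J} η^{(J)}(ℓ). -/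
open MeasureTheory

/-! Fix a label set `L`. All factors being nonnegative, each power `ω i` distributes over the
product form `w i L * ∏ ℓ, p i (x ℓ) ℓ L`, so the weighted geometric product is again of product
form, with weight `∏ i, w i L ^ ω i` and single-object factors `x ↦ ∏ i, p i x ℓ L ^ ω i`.
Fubini on `X^L` then integrates the product factor by factor, giving `∏ ℓ, η L ℓ`. -/

theorem Real.mul_prod_rpow {ι : Type*} {s : Finset ι} {a : ℝ} {f : ι → ℝ} (ha : 0 ≤ a)
    (hf : ∀ i ∈ s, 0 ≤ f i) (r : ℝ) :
    (a * ∏ i ∈ s, f i) ^ r = a ^ r * ∏ i ∈ s, f i ^ r := by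
  rw [Real.mul_rpow ha (Finset.prod_nonneg hf), Real.finsetProd_rpow s f hf]

theorem Real.prod_mul_prod_rpow {I ι : Type*} {s : Finset I} {t : Finset ι} {a : I → ℝ}
    {f : I → ι → ℝ} (ha : ∀ i ∈ s, 0 ≤ a i) (hf : ∀ i ∈ s, ∀ ℓ ∈ t, 0 ≤ f i ℓ) (ω : I → ℝ) :
    ∏ i ∈ s, (a i * ∏ ℓ ∈ t, f i ℓ) ^ ω i =
      (∏ i ∈ s, a i ^ ω i) * ∏ ℓ ∈ t, ∏ i ∈ s, f i ℓ ^ ω i := by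
  rw [Finset.prod_congr rfl fun i hi => Real.mul_prod_rpow (ha i hi) (hf i hi) (ω i),
    Finset.prod_mul_distrib, Finset.prod_comm]

theorem integral_pi_prod_mul_prod_rpow {X : Type*} [MeasurableSpace X] (μ : Measure X)
    [SigmaFinite μ] {ι I : Type*} [Fintype ι] [Fintype I] {a : I → ℝ} {f : I → ι → X → ℝ}
    (ha : ∀ i, 0 ≤ a i) (hf : ∀ i ℓ x, 0 ≤ f i ℓ x) (ω : I → ℝ) :
    ∫ x, ∏ i, (a i * ∏ ℓ, f i ℓ (x ℓ)) ^ ω i ∂(Measure.pi fun _ : ι => μ) =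
      (∏ i, a i ^ ω i) * ∏ ℓ, ∫ y, ∏ i, f i ℓ y ^ ω i ∂μ := by
  simp_rw [Real.prod_mul_prod_rpow (fun i _ => ha i) (fun i _ ℓ _ => hf i ℓ _) ω]
  rw [integral_const_mul, integral_fintype_prod_eq_prod (fun ℓ y => ∏ i, f i ℓ y ^ ω i)]

theorem mdglmb_geometric_product_set_integral_general
    {X : Type*} [MeasurableSpace X] (μ : Measure X) [SigmaFinite μ]
    {𝕃 : Type*} [Fintype 𝕃]
    {I : Type*} [Fintype I]
    (w : I → Finset 𝕃 → ℝ) (p : I → X → 𝕃 → Finset 𝕃 → ℝ)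
    (hwnn : ∀ i L, 0 ≤ w i L)
    (hpnn : ∀ i x ℓ L, 0 ≤ p i x ℓ L)
    (ω : I → ℝ)
    (η : Finset 𝕃 → 𝕃 → ℝ)
    (hη : ∀ L ℓ, η L ℓ = ∫ x, ∏ i, p i x ℓ L ^ ω i ∂μ) :
    ∑ L : Finset 𝕃,
      ∫ x, ∏ i, (w i L * ∏ ℓ : L, p i (x ℓ) ℓ L) ^ ω i
        ∂(Measure.pi fun _ : L => μ) =
    ∑ J : Finset 𝕃, (∏ i, w i J ^ ω i) * ∏ ℓ : J, η J ℓ := by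
  refine Finset.sum_congr rfl fun L _ => ?_
  rw [integral_pi_prod_mul_prod_rpow μ (f := fun i (ℓ : L) x => p i x ℓ L)
    (fun i => hwnn i L) (fun i ℓ x => hpnn i x ℓ L) ω]
  simp only [hη]

/-- Set integral of the weighted geometric product of Mδ-GLMB densities:
`∑_{L ⊆ 𝕃} ∫_{X^L} ∏ i, π_i(L,x)^{ω i} dμ^L = ∑_{J ⊆ 𝕃} ∏ i, w i J ^ ω i * ∏_{ℓ∈J} η^{(J)}(ℓ)`. -/
theorem mdglmb_geometric_product_set_integral
    {X : Type*} [MeasurableSpace X] (μ : Measure X) [SigmaFinite μ]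
    {𝕃 : Type*} [Fintype 𝕃]
    {I : Type*} [Fintype I]
    (w : I → Finset 𝕃 → ℝ) (p : I → X → 𝕃 → Finset 𝕃 → ℝ)
    (hwnn : ∀ i L, 0 ≤ w i L) (hwsum : ∀ i, ∑ L : Finset 𝕃, w i L = 1)
    (hpmeas : ∀ i ℓ L, Measurable (fun x => p i x ℓ L))
    (hpnn : ∀ i x ℓ L, 0 ≤ p i x ℓ L)
    (hpnorm : ∀ i ℓ L, ∫ x, p i x ℓ L ∂μ = 1)
    (ω : I → ℝ) (hωpos : ∀ i, 0 < ω i) (hωsum : ∑ i, ω i = 1)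
    (η : Finset 𝕃 → 𝕃 → ℝ)
    (hη : ∀ L ℓ, η L ℓ = ∫ x, ∏ i, p i x ℓ L ^ ω i ∂μ)
    (hηfin : ∀ (L : Finset 𝕃) (ℓ : 𝕃),
      Integrable (fun x => ∏ i, p i x ℓ L ^ ω i) μ) :
    ∑ L : Finset 𝕃,
      ∫ x, ∏ i, (w i L * ∏ ℓ : L, p i (x ℓ) ℓ L) ^ ω i
        ∂(Measure.pi fun _ : L => μ) =
    ∑ J : Finset 𝕃, (∏ i, w i J ^ ω i) * ∏ ℓ : J, η J ℓ :=
  mdglmb_geometric_product_set_integral_general μ w p hwnn hpnn ω η hη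
end

section
/- (Closure of LMB densities under Kullback–Leibler averaging.) For each i in a finite index set I, let π_i be the LMB density with parameter set {(r_i(ℓ), p_i(·, ℓ))}_{ℓ∈𝕃}, where 0 < r_i(ℓ) < 1 and each p_i(·, ℓ) is strictly positive, and let ω_i ≥ 0 with ∑_{i∈I} ω_i = 1. Define η(ℓ) = ∫_X ∏_{i∈I} p_i(x, ℓ)^{ω_i} dμ(x), assumed positive and finite for all ℓ, and set q̃(ℓ) = ∏_{i∈I} (1 − r_i(ℓ))^{ω_i}, r̃(ℓ) = η(ℓ) ∏_{i∈I} r_i(ℓ)^{ω_i}, r̄(ℓ) = r̃(ℓ)/(q̃(ℓ) + r̃(ℓ)), and p̄(x, ℓ) = η(ℓ)^{-1} ∏_{i∈I} p_i(x, ℓ)^{ω_i}. Then the normalized weighted geometric mean of the π_i is exactly the LMB density with parameter set {(r̄(ℓ), p̄(·, ℓ))}_{ℓ∈𝕃}: for every L ⊆ 𝕃 and x ∈ X^L, ∏_{i∈I} π_i(L, x)^{ω_i} / (∑_{J ⊆ 𝕃} ∫_{X^J} ∏_{i∈I} π_i(J, y)^{ω_i} dμ^J(y)) = ∏_{ℓ∈𝕃\L}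 (1 − r̄(ℓ)) ∏_{ℓ∈L} r̄(ℓ) p̄(x_ℓ, ℓ). -/
/-!
A weighted geometric mean of LMB densities still factorizes over labels: a missing label `ℓ`
contributes `∏ᵢ (1 - rᵢ ℓ) ^ ωᵢ = q̃ ℓ` and a present one `∏ᵢ (rᵢ ℓ * pᵢ x ℓ) ^ ωᵢ`, whose integral
is `r̃ ℓ`. By Fubini and the expansion of `∏ ℓ, (q̃ ℓ + r̃ ℓ)` over subsets of labels, the set
integral of the mean is `∏ ℓ, (q̃ ℓ + r̃ ℓ)`; dividing it out label by label yields `(r̄, p̄)`.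
-/

open MeasureTheory Finset

namespace Real

variable {ι κ : Type*}

theorem prod_mul_rpow_of_nonneg (s : Finset ι) {a b : ι → ℝ} (ha : ∀ i ∈ s, 0 ≤ a i)
    (hb : ∀ i ∈ s, 0 ≤ b i) (ω : ι → ℝ) :
    ∏ i ∈ s, (a i * b i) ^ ω i = (∏ i ∈ s, a i ^ ω i) * ∏ i ∈ s, b i ^ ω i := by
  rw [← prod_mul_distrib]
  exact prod_congr rfl fun i hi => mul_rpow (ha i hi) (hb i hi)

theorem prod_rpow_prod_comm (s : Finset ι) (t : Finset κ) {g : ι → κ → ℝ}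
    (hg : ∀ i ∈ s, ∀ k ∈ t, 0 ≤ g i k) (ω : ι → ℝ) :
    ∏ i ∈ s, (∏ k ∈ t, g i k) ^ ω i = ∏ k ∈ t, ∏ i ∈ s, g i k ^ ω i := by
  rw [prod_comm (s := t)]
  exact prod_congr rfl fun i hi => (finsetProd_rpow t _ (hg i hi) _).symm

end Real

section LMB

variable {X 𝕃 : Type*} [Fintype 𝕃] [DecidableEq 𝕃]

/-- The LMB density with parameters `(r, p)` is `lmbProduct (1 - r) (fun x ℓ => r ℓ * p x ℓ)`;
without the normalization `q ℓ + ∫ f · ℓ = 1` the family is closed under weighted geometric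
means. -/
def lmbProduct (q : 𝕃 → ℝ) (f : X → 𝕃 → ℝ) (L : Finset 𝕃) (x : L → X) : ℝ :=
  (∏ ℓ ∈ Lᶜ, q ℓ) * ∏ ℓ : L, f (x ℓ) ℓ

theorem prod_lmbProduct_rpow {I : Type*} [Fintype I] {q : I → 𝕃 → ℝ} {f : I → X → 𝕃 → ℝ}
    (hq : ∀ i ℓ, 0 ≤ q i ℓ) (hf : ∀ i x ℓ, 0 ≤ f i x ℓ) (ω : I → ℝ) (L : Finset 𝕃)
    (x : L → X) :
    ∏ i, lmbProduct (q i) (f i) L x ^ ω i =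
      lmbProduct (fun ℓ => ∏ i, q i ℓ ^ ω i) (fun x ℓ => ∏ i, f i x ℓ ^ ω i) L x := by
  simp only [lmbProduct]
  rw [Real.prod_mul_rpow_of_nonneg (a := fun i => ∏ ℓ ∈ Lᶜ, q i ℓ)
      (b := fun i => ∏ ℓ : L, f i (x ℓ) ℓ) _ (fun i _ => prod_nonneg fun ℓ _ => hq i ℓ)
      (fun i _ => prod_nonneg fun ℓ _ => hf i _ ℓ),
    Real.prod_rpow_prod_comm _ _ (fun i _ ℓ _ => hq i ℓ),
    Real.prod_rpow_prod_comm (g := fun i ℓ => f i (x ℓ) ℓ) _ _ (fun i _ ℓ _ => hf i _ ℓ)]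

theorem integral_lmbProduct [MeasurableSpace X] (μ : Measure X) [SigmaFinite μ]
    (q : 𝕃 → ℝ) (f : X → 𝕃 → ℝ) (J : Finset 𝕃) :
    ∫ y, lmbProduct q f J y ∂(Measure.pi fun _ : J => μ) =
      (∏ ℓ ∈ Jᶜ, q ℓ) * ∏ ℓ ∈ J, ∫ x, f x ℓ ∂μ := by
  simp only [lmbProduct]
  rw [integral_const_mul,
    integral_fintype_prod_eq_prod (fun (ℓ : J) x => f x ℓ), prod_coe_sort J fun ℓ => ∫ x, f x ℓ ∂μ]

theorem sum_integral_lmbProduct [MeasurableSpace X] (μ : Measure X) [SigmaFinite μ]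
    (q : 𝕃 → ℝ) (f : X → 𝕃 → ℝ) :
    ∑ J : Finset 𝕃, ∫ y, lmbProduct q f J y ∂(Measure.pi fun _ : J => μ) =
      ∏ ℓ, (q ℓ + ∫ x, f x ℓ ∂μ) := by
  simp_rw [integral_lmbProduct, add_comm (q _), Fintype.prod_add, mul_comm]

theorem lmbProduct_div_prod (q c : 𝕃 → ℝ) (f : X → 𝕃 → ℝ) (L : Finset 𝕃) (x : L → X) :
    lmbProduct q f L x / ∏ ℓ, c ℓ =
      lmbProduct (fun ℓ => q ℓ / c ℓ) (fun x ℓ => f x ℓ / c ℓ) L x := by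
  rw [lmbProduct, lmbProduct, ← prod_compl_mul_prod L c, ← prod_coe_sort L c, mul_div_mul_comm,
    prod_div_distrib, prod_div_distrib]

end LMB

theorem lmb_closed_under_kla_general
    {X : Type*} [MeasurableSpace X] (μ : Measure X) [SigmaFinite μ]
    {𝕃 : Type*} [Fintype 𝕃] [DecidableEq 𝕃]
    {I : Type*} [Fintype I]
    (r : I → 𝕃 → ℝ) (p : I → X → 𝕃 → ℝ)
    (hr : ∀ i ℓ, 0 < r i ℓ ∧ r i ℓ < 1)
    (hppos : ∀ i x ℓ, 0 < p i x ℓ)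
    (ω : I → ℝ)
    (η : 𝕃 → ℝ)
    (hη : ∀ ℓ, η ℓ = ∫ x, ∏ i, p i x ℓ ^ ω i ∂μ)
    (hηpos : ∀ ℓ, 0 < η ℓ)
    (qt rt rbar : 𝕃 → ℝ) (pbar : X → 𝕃 → ℝ)
    (hqt : ∀ ℓ, qt ℓ = ∏ i, (1 - r i ℓ) ^ ω i)
    (hrt : ∀ ℓ, rt ℓ = η ℓ * ∏ i, r i ℓ ^ ω i)
    (hrbar : ∀ ℓ, rbar ℓ = rt ℓ / (qt ℓ + rt ℓ))
    (hpbar : ∀ x ℓ, pbar x ℓ = (η ℓ)⁻¹ * ∏ i, p i x ℓ ^ ω i) :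
    ∀ (L : Finset 𝕃) (x : (↥L) → X),
      (∏ i, ((∏ ℓ ∈ Lᶜ, (1 - r i ℓ)) * ∏ ℓ : L, r i ℓ * p i (x ℓ) ℓ) ^ ω i) /
        (∑ J : Finset 𝕃,
          ∫ y, ∏ i, ((∏ ℓ ∈ Jᶜ, (1 - r i ℓ)) * ∏ ℓ : J, r i ℓ * p i (y ℓ) ℓ) ^ ω i
            ∂(Measure.pi fun _ : J => μ)) =
      (∏ ℓ ∈ Lᶜ, (1 - rbar ℓ)) * ∏ ℓ : L, rbar ℓ * pbar (x ℓ) ℓ := by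
  intro L x
  have hF : ∀ z ℓ, ∏ i, (r i ℓ * p i z ℓ) ^ ω i = (∏ i, r i ℓ ^ ω i) * ∏ i, p i z ℓ ^ ω i :=
    fun z ℓ => Real.prod_mul_rpow_of_nonneg _ (fun i _ => (hr i ℓ).1.le)
      (fun i _ => (hppos i z ℓ).le) ω
  have hintF : ∀ ℓ, ∫ z, ∏ i, (r i ℓ * p i z ℓ) ^ ω i ∂μ = rt ℓ := fun ℓ => by
    simp_rw [hF, integral_const_mul, hrt, hη, mul_comm]
  have hden : ∀ ℓ, qt ℓ + rt ℓ ≠ 0 := fun ℓ => by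
    rw [hqt, hrt]
    exact (add_pos (prod_pos fun i _ => Real.rpow_pos_of_pos (sub_pos.2 (hr i ℓ).2) _)
      (mul_pos (hηpos ℓ) (prod_pos fun i _ => Real.rpow_pos_of_pos (hr i ℓ).1 _))).ne'
  show (∏ i, lmbProduct (fun ℓ => 1 - r i ℓ) (fun z ℓ => r i ℓ * p i z ℓ) L x ^ ω i) /
      (∑ J : Finset 𝕃, ∫ y, ∏ i, lmbProduct (fun ℓ => 1 - r i ℓ) (fun z ℓ => r i ℓ * p i z ℓ) J y
        ^ ω i ∂(Measure.pi fun _ : J => μ)) =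
    lmbProduct (fun ℓ => 1 - rbar ℓ) (fun z ℓ => rbar ℓ * pbar z ℓ) L x
  simp_rw [prod_lmbProduct_rpow (fun i ℓ => (sub_pos.2 (hr i ℓ).2).le)
    (fun i z ℓ => (mul_pos (hr i ℓ).1 (hppos i z ℓ)).le), sum_integral_lmbProduct, hintF, ← hqt,
    lmbProduct_div_prod]
  congr 1
  · funext ℓ
    rw [hrbar, one_sub_div (hden ℓ), add_sub_cancel_right]
  · funext z ℓ
    rw [hrbar, hpbar, hF, hrt]
    field_simp [(hηpos ℓ).ne']

/-- Closure of LMB densities under Kullback–Leibler averaging: the normalized weighted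
geometric mean of LMB densities with parameters `{(r i ℓ, p i · ℓ)}` is the LMB density
with parameters `{(r̄ ℓ, p̄ · ℓ)}`. -/
theorem lmb_closed_under_kla
    {X : Type*} [MeasurableSpace X] (μ : Measure X) [SigmaFinite μ]
    {𝕃 : Type*} [Fintype 𝕃] [DecidableEq 𝕃]
    {I : Type*} [Fintype I]
    (r : I → 𝕃 → ℝ) (p : I → X → 𝕃 → ℝ)
    (hr : ∀ i ℓ, 0 < r i ℓ ∧ r i ℓ < 1)
    (hpmeas : ∀ i ℓ, Measurable (fun x => p i x ℓ))
    (hppos : ∀ i x ℓ, 0 < p i x ℓ)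
    (hpnorm : ∀ i ℓ, ∫ x, p i x ℓ ∂μ = 1)
    (ω : I → ℝ) (hωnn : ∀ i, 0 ≤ ω i) (hωsum : ∑ i, ω i = 1)
    (η : 𝕃 → ℝ)
    (hη : ∀ ℓ, η ℓ = ∫ x, ∏ i, p i x ℓ ^ ω i ∂μ)
    (hηpos : ∀ ℓ, 0 < η ℓ)
    (hηfin : ∀ ℓ, Integrable (fun x => ∏ i, p i x ℓ ^ ω i) μ)
    (qt rt rbar : 𝕃 → ℝ) (pbar : X → 𝕃 → ℝ)
    (hqt : ∀ ℓ, qt ℓ = ∏ i, (1 - r i ℓ) ^ ω i)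
    (hrt : ∀ ℓ, rt ℓ = η ℓ * ∏ i, r i ℓ ^ ω i)
    (hrbar : ∀ ℓ, rbar ℓ = rt ℓ / (qt ℓ + rt ℓ))
    (hpbar : ∀ x ℓ, pbar x ℓ = (η ℓ)⁻¹ * ∏ i, p i x ℓ ^ ω i) :
    ∀ (L : Finset 𝕃) (x : (↥L) → X),
      (∏ i, ((∏ ℓ ∈ Lᶜ, (1 - r i ℓ)) * ∏ ℓ : L, r i ℓ * p i (x ℓ) ℓ) ^ ω i) /
        (∑ J : Finset 𝕃,
          ∫ y, ∏ i, ((∏ ℓ ∈ Jᶜ, (1 - r i ℓ)) * ∏ ℓ : J, r i ℓ * p i (y ℓ) ℓ) ^ ω i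
            ∂(Measure.pi fun _ : J => μ)) =
      (∏ ℓ ∈ Lᶜ, (1 - rbar ℓ)) * ∏ ℓ : L, rbar ℓ * pbar (x ℓ) ℓ :=
  lmb_closed_under_kla_general μ r p hr hppos ω η hη hηpos qt rt rbar pbar hqt hrt hrbar hpbar
end

section
/- With the notation and hypotheses of the LMB fusion setting (LMB densities π_i with parameters {(r_i(ℓ), p_i(·, ℓ))}, 0 < r_i(ℓ) < 1, weights ω_i ≥ 0 summing to 1, η(ℓ) = ∫_X ∏_{i∈I} p_i(x, ℓ)^{ω_i} dμ(x) positive and finite, q̃(ℓ) = ∏_{i∈I} (1 − r_i(ℓ))^{ω_i}, r̃(ℓ) = η(ℓ) ∏_{i∈I} r_i(ℓ)^{ω_i}), the set integral of the weighted geometric product equals ∑_{L ⊆ 𝕃} ∫_{X^L} ∏_{i∈I} π_i(L, x)^{ω_i} dμ^L(x) = ∏_{ℓ∈𝕃} (q̃(ℓ) + r̃(ℓ)). -/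
/-!
The LMB density factorizes over labels, and raising to the powers `ω i` and multiplying over
`i` preserves that factorization: a label `ℓ ∉ L` contributes `∏ i, (1 - r i ℓ) ^ ω i` and a
label `ℓ ∈ L` contributes `∏ i, (r i ℓ * p i (x ℓ) ℓ) ^ ω i`. Fubini on the product measure
turns the integral over `X^L` into a product over `ℓ ∈ L` of one-dimensional integrals, each
equal to `r̃ ℓ`, and summing `(∏ ℓ ∈ L, r̃ ℓ) * ∏ ℓ ∉ L, q̃ ℓ` over all `L ⊆ 𝕃` is the expansion
of `∏ ℓ, (q̃ ℓ + r̃ ℓ)`.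
-/

open MeasureTheory Finset

theorem Real.prod_mul_rpow {ι : Type*} (s : Finset ι) {a b ω : ι → ℝ}
    (ha : ∀ i ∈ s, 0 ≤ a i) (hb : ∀ i ∈ s, 0 ≤ b i) :
    ∏ i ∈ s, (a i * b i) ^ ω i = (∏ i ∈ s, a i ^ ω i) * ∏ i ∈ s, b i ^ ω i := by
  rw [← prod_mul_distrib]
  exact prod_congr rfl fun i hi => Real.mul_rpow (ha i hi) (hb i hi)

theorem Real.prod_rpow_prod_comm_s6 {ι κ : Type*} (t : Finset ι) (s : Finset κ) {f : ι → κ → ℝ}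
    (hf : ∀ i ∈ t, ∀ k ∈ s, 0 ≤ f i k) (ω : ι → ℝ) :
    ∏ i ∈ t, (∏ k ∈ s, f i k) ^ ω i = ∏ k ∈ s, ∏ i ∈ t, f i k ^ ω i := by
  rw [← prod_comm]
  exact prod_congr rfl fun i hi => (Real.finsetProd_rpow s _ (hf i hi) _).symm

noncomputable def lmbDensity {X 𝕃 : Type*} [Fintype 𝕃] [DecidableEq 𝕃]
    (r : 𝕃 → ℝ) (p : X → 𝕃 → ℝ) (L : Finset 𝕃) (x : L → X) : ℝ :=
  (∏ ℓ ∈ Lᶜ, (1 - r ℓ)) * ∏ ℓ : L, r ℓ * p (x ℓ) ℓ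

section GeometricProduct

variable {X 𝕃 I : Type*} [Fintype 𝕃] [DecidableEq 𝕃] [Fintype I]
  {r : I → 𝕃 → ℝ} {p : I → X → 𝕃 → ℝ}

theorem prod_lmbDensity_rpow (hr : ∀ i ℓ, 0 ≤ r i ℓ ∧ r i ℓ ≤ 1) (hp : ∀ i x ℓ, 0 ≤ p i x ℓ)
    (ω : I → ℝ) (L : Finset 𝕃) (x : L → X) :
    ∏ i, lmbDensity (r i) (p i) L x ^ ω i =
      (∏ ℓ ∈ Lᶜ, ∏ i, (1 - r i ℓ) ^ ω i) *
        ∏ ℓ : L, (∏ i, r i ℓ ^ ω i) * ∏ i, p i (x ℓ) ℓ ^ ω i := by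
  have hq : ∀ i, ∀ ℓ ∈ Lᶜ, 0 ≤ 1 - r i ℓ := fun i ℓ _ => sub_nonneg.2 (hr i ℓ).2
  have hrp : ∀ i, ∀ ℓ ∈ (univ : Finset L), 0 ≤ r i ℓ * p i (x ℓ) ℓ :=
    fun i ℓ _ => mul_nonneg (hr i ℓ).1 (hp i _ _)
  unfold lmbDensity
  rw [Real.prod_mul_rpow univ (fun i _ => prod_nonneg (hq i))
      (fun i _ => prod_nonneg (hrp i)),
    Real.prod_rpow_prod_comm_s6 _ _ (fun i _ => hq i), Real.prod_rpow_prod_comm_s6 _ _ (fun i _ => hrp i)]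
  congr 1
  exact prod_congr rfl fun ℓ _ =>
    Real.prod_mul_rpow univ (fun i _ => (hr i ℓ).1) (fun i _ => hp i _ _)

theorem integral_prod_lmbDensity_rpow [MeasurableSpace X] (μ : Measure X) [SigmaFinite μ]
    (hr : ∀ i ℓ, 0 ≤ r i ℓ ∧ r i ℓ ≤ 1) (hp : ∀ i x ℓ, 0 ≤ p i x ℓ) (ω : I → ℝ)
    (L : Finset 𝕃) :
    ∫ x, ∏ i, lmbDensity (r i) (p i) L x ^ ω i ∂(Measure.pi fun _ : L => μ) =
      (∏ ℓ ∈ L, (∫ y, ∏ i, p i y ℓ ^ ω i ∂μ) * ∏ i, r i ℓ ^ ω i) *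
        ∏ ℓ ∈ Lᶜ, ∏ i, (1 - r i ℓ) ^ ω i := by
  simp_rw [prod_lmbDensity_rpow hr hp, integral_const_mul]
  rw [integral_fintype_prod_eq_prod (fun (ℓ : L) y => (∏ i, r i ℓ ^ ω i) * ∏ i, p i y ℓ ^ ω i),
    mul_comm, ← prod_coe_sort L fun ℓ => (∫ y, ∏ i, p i y ℓ ^ ω i ∂μ) * ∏ i, r i ℓ ^ ω i]
  simp_rw [integral_const_mul, mul_comm (∏ i, r i _ ^ ω i)]

end GeometricProduct

theorem lmb_geometric_product_set_integral_general
    {X : Type*} [MeasurableSpace X] (μ : Measure X) [SigmaFinite μ]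
    {𝕃 : Type*} [Fintype 𝕃] [DecidableEq 𝕃]
    {I : Type*} [Fintype I]
    (r : I → 𝕃 → ℝ) (p : I → X → 𝕃 → ℝ)
    (hr : ∀ i ℓ, 0 < r i ℓ ∧ r i ℓ < 1)
    (hpnn : ∀ i x ℓ, 0 ≤ p i x ℓ)
    (ω : I → ℝ)
    (η : 𝕃 → ℝ)
    (hη : ∀ ℓ, η ℓ = ∫ x, ∏ i, p i x ℓ ^ ω i ∂μ)
    (qt rt : 𝕃 → ℝ)
    (hqt : ∀ ℓ, qt ℓ = ∏ i, (1 - r i ℓ) ^ ω i)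
    (hrt : ∀ ℓ, rt ℓ = η ℓ * ∏ i, r i ℓ ^ ω i) :
    ∑ L : Finset 𝕃,
      ∫ x, ∏ i, ((∏ ℓ ∈ Lᶜ, (1 - r i ℓ)) * ∏ ℓ : L, r i ℓ * p i (x ℓ) ℓ) ^ ω i
        ∂(Measure.pi fun _ : L => μ) =
    ∏ ℓ : 𝕃, (qt ℓ + rt ℓ) := by
  have hr' : ∀ i ℓ, 0 ≤ r i ℓ ∧ r i ℓ ≤ 1 := fun i ℓ => ⟨(hr i ℓ).1.le, (hr i ℓ).2.le⟩
  calc _ = ∑ L : Finset 𝕃, (∏ ℓ ∈ L, rt ℓ) * ∏ ℓ ∈ Lᶜ, qt ℓ :=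
        sum_congr rfl fun L _ => (integral_prod_lmbDensity_rpow μ hr' hpnn ω L).trans <| by
          simp only [hqt, hrt, hη]
    _ = ∏ ℓ, (rt ℓ + qt ℓ) := (Fintype.prod_add rt qt).symm
    _ = _ := by simp_rw [add_comm]

/-- Set integral of the weighted geometric product of LMB densities:
`∑_{L ⊆ 𝕃} ∫_{X^L} ∏ i, π_i(L,x)^{ω i} dμ^L = ∏_{ℓ∈𝕃} (q̃(ℓ) + r̃(ℓ))`. -/
theorem lmb_geometric_product_set_integral
    {X : Type*} [MeasurableSpace X] (μ : Measure X) [SigmaFinite μ]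
    {𝕃 : Type*} [Fintype 𝕃] [DecidableEq 𝕃]
    {I : Type*} [Fintype I]
    (r : I → 𝕃 → ℝ) (p : I → X → 𝕃 → ℝ)
    (hr : ∀ i ℓ, 0 < r i ℓ ∧ r i ℓ < 1)
    (hpmeas : ∀ i ℓ, Measurable (fun x => p i x ℓ))
    (hpnn : ∀ i x ℓ, 0 ≤ p i x ℓ)
    (hpnorm : ∀ i ℓ, ∫ x, p i x ℓ ∂μ = 1)
    (ω : I → ℝ) (hωnn : ∀ i, 0 ≤ ω i) (hωsum : ∑ i, ω i = 1)
    (η : 𝕃 → ℝ)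
    (hη : ∀ ℓ, η ℓ = ∫ x, ∏ i, p i x ℓ ^ ω i ∂μ)
    (hηpos : ∀ ℓ, 0 < η ℓ)
    (hηfin : ∀ ℓ, Integrable (fun x => ∏ i, p i x ℓ ^ ω i) μ)
    (qt rt : 𝕃 → ℝ)
    (hqt : ∀ ℓ, qt ℓ = ∏ i, (1 - r i ℓ) ^ ω i)
    (hrt : ∀ ℓ, rt ℓ = η ℓ * ∏ i, r i ℓ ^ ω i) :
    ∑ L : Finset 𝕃,
      ∫ x, ∏ i, ((∏ ℓ ∈ Lᶜ, (1 - r i ℓ)) * ∏ ℓ : L, r i ℓ * p i (x ℓ) ℓ) ^ ω i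
        ∂(Measure.pi fun _ : L => μ) =
    ∏ ℓ : 𝕃, (qt ℓ + rt ℓ) :=
  lmb_geometric_product_set_integral_general μ r p hr hpnn ω η hη qt rt hqt hrt
end

section
/- With the notation and hypotheses of the LMB fusion setting (LMB densities π_i with parameters {(r_i(ℓ), p_i(·, ℓ))}, 0 < r_i(ℓ) < 1, p_i(·, ℓ) strictly positive, weights ω_i ≥ 0 summing to 1, η(ℓ) = ∫_X ∏_{i∈I} p_i(x, ℓ)^{ω_i} dμ(x) positive and finite, q̃(ℓ) = ∏_{i∈I} (1 − r_i(ℓ))^{ω_i}, r̃(ℓ) = η(ℓ) ∏_{i∈I} r_i(ℓ)^{ω_i}, p̄(x, ℓ) = η(ℓ)^{-1} ∏_{i∈I} p_i(x, ℓ)^{ω_i}), the unnormalized weighted geometric product satisfies, for every L ⊆ 𝕃 and x ∈ X^L, the pointwise identity ∏_{i∈I} π_i(L, x)^{ω_i} = ∏_{ℓ∈𝕃\L} q̃(ℓ) · ∏_{ℓ∈L} r̃(ℓ) · ∏_{ℓ∈L} p̄(x_ℓ, ℓ). -/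
open MeasureTheory

/-- Pointwise identity for the unnormalized weighted geometric product of LMB densities:
`∏ i, π_i(L,x)^{ω i} = ∏_{ℓ∈𝕃∖L} q̃(ℓ) · ∏_{ℓ∈L} r̃(ℓ) · ∏_{ℓ∈L} p̄(x_ℓ, ℓ)`. -/
theorem lmb_geometric_product_pointwise
    {X : Type*} [MeasurableSpace X] (μ : Measure X) [SigmaFinite μ]
    {𝕃 : Type*} [Fintype 𝕃] [DecidableEq 𝕃]
    {I : Type*} [Fintype I]
    (r : I → 𝕃 → ℝ) (p : I → X → 𝕃 → ℝ)
    (hr : ∀ i ℓ, 0 < r i ℓ ∧ r i ℓ < 1)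
    (hpmeas : ∀ i ℓ, Measurable (fun x => p i x ℓ))
    (hppos : ∀ i x ℓ, 0 < p i x ℓ)
    (hpnorm : ∀ i ℓ, ∫ x, p i x ℓ ∂μ = 1)
    (ω : I → ℝ) (hωnn : ∀ i, 0 ≤ ω i) (hωsum : ∑ i, ω i = 1)
    (η : 𝕃 → ℝ)
    (hη : ∀ ℓ, η ℓ = ∫ x, ∏ i, p i x ℓ ^ ω i ∂μ)
    (hηpos : ∀ ℓ, 0 < η ℓ)
    (hηfin : ∀ ℓ, Integrable (fun x => ∏ i, p i x ℓ ^ ω i) μ)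
    (qt rt : 𝕃 → ℝ) (pbar : X → 𝕃 → ℝ)
    (hqt : ∀ ℓ, qt ℓ = ∏ i, (1 - r i ℓ) ^ ω i)
    (hrt : ∀ ℓ, rt ℓ = η ℓ * ∏ i, r i ℓ ^ ω i)
    (hpbar : ∀ x ℓ, pbar x ℓ = (η ℓ)⁻¹ * ∏ i, p i x ℓ ^ ω i) :
    ∀ (L : Finset 𝕃) (x : (↥L) → X),
      ∏ i, ((∏ ℓ ∈ Lᶜ, (1 - r i ℓ)) * ∏ ℓ : L, r i ℓ * p i (x ℓ) ℓ) ^ ω i =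
      (∏ ℓ ∈ Lᶜ, qt ℓ) * (∏ ℓ : L, rt ℓ) * ∏ ℓ : L, pbar (x ℓ) ℓ := by
  intro L x
  have h1r : ∀ i ℓ, (0:ℝ) ≤ 1 - r i ℓ := fun i ℓ => by linarith [(hr i ℓ).2]
  have hle : ∀ i (ℓ : L), (0:ℝ) ≤ r i (ℓ : 𝕃) * p i (x ℓ) ℓ := fun i ℓ =>
    mul_nonneg (hr i ℓ).1.le (hppos i _ _).le
  have lhs_eq : ∏ i, ((∏ ℓ ∈ Lᶜ, (1 - r i ℓ)) * ∏ ℓ : L, r i (ℓ:𝕃) * p i (x ℓ) ℓ) ^ ω i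
      = (∏ ℓ ∈ Lᶜ, ∏ i, (1 - r i ℓ) ^ ω i) *
        ((∏ ℓ : L, ∏ i, r i (ℓ:𝕃) ^ ω i) * ∏ ℓ : L, ∏ i, p i (x ℓ) (ℓ:𝕃) ^ ω i) := by
    have : ∀ i, ((∏ ℓ ∈ Lᶜ, (1 - r i ℓ)) * ∏ ℓ : L, r i (ℓ:𝕃) * p i (x ℓ) ℓ) ^ ω i
        = (∏ ℓ ∈ Lᶜ, (1 - r i ℓ) ^ ω i) *
          ((∏ ℓ : L, r i (ℓ:𝕃) ^ ω i) * ∏ ℓ : L, p i (x ℓ) (ℓ:𝕃) ^ ω i) := by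
      intro i
      rw [Real.mul_rpow (Finset.prod_nonneg fun ℓ _ => h1r i ℓ)
            (Finset.prod_nonneg fun ℓ _ => hle i ℓ),
          ← Real.finset_prod_rpow _ _ (fun ℓ _ => h1r i ℓ),
          ← Real.finset_prod_rpow _ _ (fun ℓ _ => hle i ℓ),
          ← Finset.prod_mul_distrib]
      congr 1
      exact Finset.prod_congr rfl fun ℓ _ =>
        Real.mul_rpow (hr i ℓ).1.le (hppos i _ _).le
    rw [Finset.prod_congr rfl fun i _ => this i, Finset.prod_mul_distrib,
        Finset.prod_mul_distrib]
    congr 1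
    · exact Finset.prod_comm
    congr 1 <;> exact Finset.prod_comm
  rw [lhs_eq]
  simp only [hqt, hrt, hpbar]
  rw [Finset.prod_mul_distrib, Finset.prod_mul_distrib]
  have hcancel : (∏ ℓ : L, η (ℓ:𝕃)) * (∏ ℓ : L, (η (ℓ:𝕃))⁻¹) = 1 := by
    rw [← Finset.prod_mul_distrib]
    exact Finset.prod_eq_one fun ℓ _ => mul_inv_cancel₀ (hηpos ℓ).ne'
  linear_combination (-((∏ ℓ ∈ Lᶜ, ∏ i, (1 - r i ℓ) ^ ω i) *
    (∏ ℓ : L, ∏ i, r i (ℓ:𝕃) ^ ω i) * ∏ ℓ : L, ∏ i, p i (x ℓ) (ℓ:𝕃) ^ ω i)) * hcancel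
end

section
/- (KLA of Gaussians is Gaussian / Covariance Intersection, scalar case.) Let I be a finite index set, μ_i ∈ ℝ and σ_i > 0 for i ∈ I, and ω_i ≥ 0 with ∑_{i∈I} ω_i = 1. Let σ̄² = (∑_{i∈I} ω_i / σ_i²)^{-1} and μ̄ = σ̄² ∑_{i∈I} ω_i μ_i / σ_i². Then the normalized weighted geometric mean of the Gaussian densities equals the Gaussian density with the fused parameters: for all x ∈ ℝ, ∏_{i∈I} N(x; μ_i, σ_i²)^{ω_i} / ∫_ℝ ∏_{i∈I} N(y; μ_i, σ_i²)^{ω_i} dy = N(x; μ̄, σ̄²). Equivalently, the fused information pair (σ̄^{-2}, σ̄^{-2} μ̄) is the weighted arithmetic mean of the information pairs (σ_i^{-2}, σ_i^{-2} μ_i). -/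
open MeasureTheory Real

/-- The real Gaussian probability density with mean `m` and variance `v`:
`N(x; m, v) = (2πv)^{-1/2} exp(−(x−m)²/(2v))`. -/
noncomputable def gaussianPdf (m v x : ℝ) : ℝ :=
  (Real.sqrt (2 * Real.pi * v))⁻¹ * Real.exp (-(x - m) ^ 2 / (2 * v))

/-- The Kullback–Leibler average (normalized weighted geometric mean) of Gaussian
densities is Gaussian, with fused information pair equal to the weighted arithmetic
mean of the information pairs (Covariance Intersection, scalar case). -/
theorem kla_gaussian_is_gaussian
    {I : Type*} [Fintype I]
    (m σ : I → ℝ) (hσ : ∀ i, 0 < σ i)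
    (ω : I → ℝ) (hωnn : ∀ i, 0 ≤ ω i) (hωsum : ∑ i, ω i = 1)
    (vbar mbar : ℝ)
    (hv : vbar = (∑ i, ω i / σ i ^ 2)⁻¹)
    (hm : mbar = vbar * ∑ i, ω i * m i / σ i ^ 2) :
    (∀ x : ℝ,
      (∏ i, gaussianPdf (m i) (σ i ^ 2) x ^ ω i) /
        (∫ y : ℝ, ∏ i, gaussianPdf (m i) (σ i ^ 2) y ^ ω i) =
      gaussianPdf mbar vbar x) ∧
    vbar⁻¹ = ∑ i, ω i * (σ i ^ 2)⁻¹ ∧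
    vbar⁻¹ * mbar = ∑ i, ω i * ((σ i ^ 2)⁻¹ * m i) := by
  have hσ2 : ∀ i, (0:ℝ) < σ i ^ 2 := fun i => pow_pos (hσ i) 2
  have hapos : 0 < ∑ i, ω i / σ i ^ 2 := by
    obtain ⟨i, hi⟩ : ∃ i, ω i ≠ 0 := by
      by_contra h
      push_neg at h
      simp [h] at hωsum
    refine Finset.sum_pos' (fun j _ => div_nonneg (hωnn j) (hσ2 j).le)
      ⟨i, Finset.mem_univ i, div_pos ((hωnn i).lt_of_ne (Ne.symm hi)) (hσ2 i)⟩
  have hvb : 0 < vbar := by rw [hv]; exact inv_pos.2 hapos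
  have hinv : vbar⁻¹ = ∑ i, ω i / σ i ^ 2 := by rw [hv, inv_inv]
  -- quadratic identity
  have hquad : ∀ x : ℝ, ∑ i, ω i * ((x - m i) ^ 2 / (2 * σ i ^ 2)) =
      (x - mbar) ^ 2 / (2 * vbar) +
        (∑ i, ω i * (m i ^ 2 / (2 * σ i ^ 2)) - mbar ^ 2 / (2 * vbar)) := by
    intro x
    have expand : ∑ i, ω i * ((x - m i) ^ 2 / (2 * σ i ^ 2)) =
        x ^ 2 / 2 * (∑ i, ω i / σ i ^ 2) - x * (∑ i, ω i * m i / σ i ^ 2)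
          + ∑ i, ω i * (m i ^ 2 / (2 * σ i ^ 2)) := by
      rw [Finset.mul_sum, Finset.mul_sum, ← Finset.sum_sub_distrib,
        ← Finset.sum_add_distrib]
      refine Finset.sum_congr rfl fun i _ => ?_
      have h := (hσ2 i).ne'
      field_simp
      ring
    rw [expand, ← hinv, hm]
    have hb' : ∑ i, ω i * m i / σ i ^ 2 = vbar⁻¹ * mbar := by
      rw [hm, ← mul_assoc, inv_mul_cancel₀ hvb.ne', one_mul]
    rw [hb']
    field_simp
    ring
  set c : ℝ := ∑ i, ω i * (m i ^ 2 / (2 * σ i ^ 2)) - mbar ^ 2 / (2 * vbar) with hc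
  set C0 : ℝ := ∑ i, ω i * Real.log (Real.sqrt (2 * Real.pi * σ i ^ 2)) with hC0
  set K : ℝ := Real.exp (-C0 - c) * Real.sqrt (2 * Real.pi * vbar) with hK
  have h2pv : (0:ℝ) < 2 * Real.pi * vbar := by positivity
  have hKpos : 0 < K := mul_pos (Real.exp_pos _) (Real.sqrt_pos.2 h2pv)
  have key : ∀ x : ℝ, (∏ i, gaussianPdf (m i) (σ i ^ 2) x ^ ω i)
      = K * gaussianPdf mbar vbar x := by
    intro x
    have h1 : ∀ i, gaussianPdf (m i) (σ i ^ 2) x ^ ω i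
        = Real.exp (ω i * (-Real.log (Real.sqrt (2 * Real.pi * σ i ^ 2)))
            + -(ω i * ((x - m i) ^ 2 / (2 * σ i ^ 2)))) := by
      intro i
      have h2 : (0:ℝ) < 2 * Real.pi * σ i ^ 2 := by
        have := hσ2 i; positivity
      have hs : (0:ℝ) < Real.sqrt (2 * Real.pi * σ i ^ 2) := Real.sqrt_pos.2 h2
      have hpos : 0 < gaussianPdf (m i) (σ i ^ 2) x :=
        mul_pos (inv_pos.2 hs) (Real.exp_pos _)
      rw [Real.rpow_def_of_pos hpos]
      congr 1
      unfold gaussianPdf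
      rw [Real.log_mul (inv_ne_zero hs.ne') (Real.exp_ne_zero _), Real.log_inv,
        Real.log_exp]
      ring
    calc (∏ i, gaussianPdf (m i) (σ i ^ 2) x ^ ω i)
        = ∏ i, Real.exp (ω i * (-Real.log (Real.sqrt (2 * Real.pi * σ i ^ 2)))
            + -(ω i * ((x - m i) ^ 2 / (2 * σ i ^ 2)))) :=
          Finset.prod_congr rfl fun i _ => h1 i
      _ = Real.exp (∑ i, (ω i * (-Real.log (Real.sqrt (2 * Real.pi * σ i ^ 2)))
            + -(ω i * ((x - m i) ^ 2 / (2 * σ i ^ 2))))) := (Real.exp_sum _ _).symm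
      _ = Real.exp (-C0 + -(∑ i, ω i * ((x - m i) ^ 2 / (2 * σ i ^ 2)))) := by
          congr 1
          rw [Finset.sum_add_distrib]
          congr 1
          · rw [hC0, ← Finset.sum_neg_distrib]
            exact Finset.sum_congr rfl fun i _ => by ring
          · rw [← Finset.sum_neg_distrib]
      _ = K * gaussianPdf mbar vbar x := by
          rw [hquad x]
          have he : Real.exp (-C0 + -((x - mbar) ^ 2 / (2 * vbar) + c))
              = Real.exp (-C0 - c) * Real.exp (-(x - mbar) ^ 2 / (2 * vbar)) := by
            rw [← Real.exp_add]; congr 1; ring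
          rw [he, hK]
          unfold gaussianPdf
          have hs : Real.sqrt (2 * Real.pi * vbar) ≠ 0 := (Real.sqrt_pos.2 h2pv).ne'
          field_simp
  refine ⟨fun x => ?_, ?_, ?_⟩
  · have hint : (∫ y : ℝ, ∏ i, gaussianPdf (m i) (σ i ^ 2) y ^ ω i) = K := by
      calc (∫ y : ℝ, ∏ i, gaussianPdf (m i) (σ i ^ 2) y ^ ω i)
          = ∫ y : ℝ, K * gaussianPdf mbar vbar y := by
            exact integral_congr_ae (Filter.Eventually.of_forall key)
        _ = K * ∫ y : ℝ, gaussianPdf mbar vbar y := integral_const_mul _ _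
        _ = K := by
            have hv0 : (⟨vbar, hvb.le⟩ : NNReal) ≠ 0 :=
              fun h => hvb.ne' (congrArg (fun p : NNReal => (p : ℝ)) h)
            have : (∫ y : ℝ, gaussianPdf mbar vbar y)
                = ∫ y : ℝ, ProbabilityTheory.gaussianPDFReal mbar ⟨vbar, hvb.le⟩ y :=
              rfl
            rw [this, ProbabilityTheory.integral_gaussianPDFReal_eq_one mbar hv0,
              mul_one]
    rw [hint, key x, mul_comm, mul_div_assoc, div_self hKpos.ne', mul_one]
  · rw [hinv]
    exact Finset.sum_congr rfl fun i _ => by rw [div_eq_mul_inv]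
  · have hb' : vbar⁻¹ * mbar = ∑ i, ω i * m i / σ i ^ 2 := by
      rw [hm, ← mul_assoc, inv_mul_cancel₀ hvb.ne', one_mul]
    rw [hb']
    exact Finset.sum_congr rfl fun i _ => by ring
end

section
/- (Exact Chernoff fusion of a pair of Gaussian components, scalar case of equations (f2)–(f5).) Let ω ∈ (0, 1), μ_a, μ_b ∈ ℝ and P_a, P_b > 0. Define P̄ = (ω P_a^{-1} + (1−ω) P_b^{-1})^{-1}, μ̄ = P̄ (ω P_a^{-1} μ_a + (1−ω) P_b^{-1} μ_b), β(ω, P) = (2πP ω^{-1})^{1/2} / (2πP)^{ω/2}, and ᾱ = β(ω, P_a) β(1−ω, P_b) N(μ_a − μ_b; 0, P_a/ω + P_b/(1−ω)). Then for all x ∈ ℝ, N(x; μ_a, P_a)^ω · N(x; μ_b, P_b)^{1−ω} = ᾱ · N(x; μ̄, P̄). -/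
open Real

private lemma gauss_rpow (m v x w : ℝ) (hv : 0 < v) :
    gaussianPdf m v x ^ w
      = (2 * Real.pi * v) ^ (-(w / 2)) * Real.exp (w * (-(x - m) ^ 2 / (2 * v))) := by
  have h2 : (0:ℝ) < 2 * Real.pi * v := by positivity
  unfold gaussianPdf
  rw [Real.mul_rpow (by positivity) (Real.exp_nonneg _), ← Real.exp_mul,
      Real.sqrt_eq_rpow, ← Real.rpow_neg h2.le, ← Real.rpow_mul h2.le]
  congr 1
  · congr 1; ring
  · congr 1; ring

/-- Exact Chernoff fusion of a pair of Gaussian components (scalar case):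
`N(x; μa, Pa)^ω · N(x; μb, Pb)^{1−ω} = ᾱ · N(x; μ̄, P̄)`. -/
theorem chernoff_fusion_gaussian_pair
    (ω : ℝ) (hω : 0 < ω) (hω1 : ω < 1)
    (μa μb Pa Pb : ℝ) (hPa : 0 < Pa) (hPb : 0 < Pb)
    (Pbar μbar : ℝ)
    (hP : Pbar = (ω * Pa⁻¹ + (1 - ω) * Pb⁻¹)⁻¹)
    (hμ : μbar = Pbar * (ω * Pa⁻¹ * μa + (1 - ω) * Pb⁻¹ * μb))
    (β : ℝ → ℝ → ℝ)
    (hβ : ∀ w P, β w P = (2 * Real.pi * P * w⁻¹) ^ ((1 : ℝ) / 2) /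
      (2 * Real.pi * P) ^ (w / 2))
    (αbar : ℝ)
    (hα : αbar = β ω Pa * β (1 - ω) Pb *
      gaussianPdf 0 (Pa / ω + Pb / (1 - ω)) (μa - μb)) :
    ∀ x : ℝ,
      gaussianPdf μa Pa x ^ ω * gaussianPdf μb Pb x ^ (1 - ω) =
      αbar * gaussianPdf μbar Pbar x := by
  intro x
  have hω1' : (0:ℝ) < 1 - ω := by linarith
  have hπ := Real.pi_pos
  have hS : (0:ℝ) < Pa / ω + Pb / (1 - ω) := by positivity
  have hPbar : 0 < Pbar := by rw [hP]; positivity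
  have ha : (0:ℝ) < 2 * π * Pa := by positivity
  have hb : (0:ℝ) < 2 * π * Pb := by positivity
  have haω : (0:ℝ) < 2 * π * Pa * ω⁻¹ := by positivity
  have hbω : (0:ℝ) < 2 * π * Pb * (1 - ω)⁻¹ := by positivity
  have hs2 : (0:ℝ) < 2 * π * (Pa / ω + Pb / (1 - ω)) := by positivity
  have hp2 : (0:ℝ) < 2 * π * Pbar := by positivity
  have hden : ω * Pa⁻¹ + (1 - ω) * Pb⁻¹ ≠ 0 := by positivity
  have hprod : (2 * π * Pa * ω⁻¹) * (2 * π * Pb * (1 - ω)⁻¹)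
      = (2 * π * (Pa / ω + Pb / (1 - ω))) * (2 * π * Pbar) := by
    rw [hP]
    field_simp
    ring
  have hhalf : (2 * π * Pa * ω⁻¹) ^ ((1:ℝ)/2) * (2 * π * Pb * (1 - ω)⁻¹) ^ ((1:ℝ)/2)
      = (2 * π * (Pa / ω + Pb / (1 - ω))) ^ ((1:ℝ)/2) * (2 * π * Pbar) ^ ((1:ℝ)/2) := by
    rw [← Real.mul_rpow haω.le hbω.le, hprod, Real.mul_rpow hs2.le hp2.le]
  have hone : (2 * π * Pa * ω⁻¹) ^ ((1:ℝ)/2) * (2 * π * Pb * (1 - ω)⁻¹) ^ ((1:ℝ)/2)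
      * ((2 * π * (Pa / ω + Pb / (1 - ω))) ^ ((1:ℝ)/2))⁻¹
      * ((2 * π * Pbar) ^ ((1:ℝ)/2))⁻¹ = 1 := by
    rw [hhalf]
    have h1 : (2 * π * (Pa / ω + Pb / (1 - ω))) ^ ((1:ℝ)/2) ≠ 0 :=
      ne_of_gt (Real.rpow_pos_of_pos hs2 _)
    have h2 : (2 * π * Pbar) ^ ((1:ℝ)/2) ≠ 0 := ne_of_gt (Real.rpow_pos_of_pos hp2 _)
    field_simp
  have hexp : ω * (-(x - μa) ^ 2 / (2 * Pa)) + (1 - ω) * (-(x - μb) ^ 2 / (2 * Pb))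
      = -(μa - μb - 0) ^ 2 / (2 * (Pa / ω + Pb / (1 - ω))) + -(x - μbar) ^ 2 / (2 * Pbar) := by
    rw [hμ, hP]
    field_simp
    ring
  rw [gauss_rpow _ _ _ _ hPa, gauss_rpow _ _ _ _ hPb, hα, hβ, hβ]
  unfold gaussianPdf
  rw [Real.sqrt_eq_rpow, Real.sqrt_eq_rpow]
  rw [div_eq_mul_inv _ ((2 * π * Pa) ^ (ω / 2)), div_eq_mul_inv _ ((2 * π * Pb) ^ ((1 - ω) / 2)), ← Real.rpow_neg ha.le, ← Real.rpow_neg hb.le]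
  calc (2 * π * Pa) ^ (-(ω / 2)) * Real.exp (ω * (-(x - μa) ^ 2 / (2 * Pa))) *
        ((2 * π * Pb) ^ (-((1 - ω) / 2)) *
          Real.exp ((1 - ω) * (-(x - μb) ^ 2 / (2 * Pb))))
      = (2 * π * Pa) ^ (-(ω / 2)) * (2 * π * Pb) ^ (-((1 - ω) / 2)) *
        Real.exp (ω * (-(x - μa) ^ 2 / (2 * Pa)) + (1 - ω) * (-(x - μb) ^ 2 / (2 * Pb))) := by
        rw [Real.exp_add]; ring
    _ = (2 * π * Pa) ^ (-(ω / 2)) * (2 * π * Pb) ^ (-((1 - ω) / 2)) *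
        Real.exp (-(μa - μb - 0) ^ 2 / (2 * (Pa / ω + Pb / (1 - ω))) +
          -(x - μbar) ^ 2 / (2 * Pbar)) := by rw [hexp]
    _ = _ := by
        rw [Real.exp_add]
        rw [show (2 * π * Pa * ω⁻¹) ^ ((1:ℝ)/2) * (2 * π * Pa) ^ (-(ω / 2)) *
          ((2 * π * Pb * (1 - ω)⁻¹) ^ ((1:ℝ)/2) * (2 * π * Pb) ^ (-((1 - ω) / 2))) *
          (((2 * π * (Pa / ω + Pb / (1 - ω))) ^ ((1:ℝ)/2))⁻¹ *
            Real.exp (-(μa - μb - 0) ^ 2 / (2 * (Pa / ω + Pb / (1 - ω))))) *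
          (((2 * π * Pbar) ^ ((1:ℝ)/2))⁻¹ * Real.exp (-(x - μbar) ^ 2 / (2 * Pbar)))
          = ((2 * π * Pa * ω⁻¹) ^ ((1:ℝ)/2) * (2 * π * Pb * (1 - ω)⁻¹) ^ ((1:ℝ)/2)
              * ((2 * π * (Pa / ω + Pb / (1 - ω))) ^ ((1:ℝ)/2))⁻¹
              * ((2 * π * Pbar) ^ ((1:ℝ)/2))⁻¹) *
            ((2 * π * Pa) ^ (-(ω / 2)) * (2 * π * Pb) ^ (-((1 - ω) / 2)) *
              (Real.exp (-(μa - μb - 0) ^ 2 / (2 * (Pa / ω + Pb / (1 - ω)))) *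
                Real.exp (-(x - μbar) ^ 2 / (2 * Pbar)))) from by ring]
        rw [hone, one_mul]
end

section
/- (Consensus iterate identity, equation (cons2).) Let (Ω, μ) be a σ-finite measure space, N ≥ 1, and let p_0^{(1)}, …, p_0^{(N)} : Ω → ℝ be strictly positive measurable probability densities such that for every vector v ∈ ℝ^N with v_j ≥ 0 and ∑_j v_j = 1, the integral ∫ ∏_{j=1}^N p_0^{(j)}(x)^{v_j} dμ(x) is positive and finite. Let Ω̂ be an N×N matrix with nonnegative entries whose rows each sum to 1, and define the consensus iteration p_n^{(i)}(x) = ∏_{j=1}^N p_{n-1}^{(j)}(x)^{Ω̂_{ij}} / ∫ ∏_{j=1}^N p_{n-1}^{(j)}(y)^{Ω̂_{ij}} dμ(y). Then for every n ≥ 0 and every node i, p_n^{(i)}(x) = ∏_{j=1}^N p_0^{(j)}(x)^{(Ω̂^n)_{ij}} / ∫ ∏_{j=1}^N p_0^{(j)}(y)^{(Ω̂^n)_{ij}} dμ(y), i.e., the n-th consensus iterate at node i is the normalized weighted geometric mean of the initial densities with weights given by the (i,j) entries of the n-th power of the consensus matrix. -/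
/-!
The iterate at every node stays a normalized weighted geometric mean of the initial densities.
Indeed, a geometric mean ignores positive rescalings of its arguments, so the normalizing
constants of the previous iterates drop out, and the geometric mean of geometric means with
weight rows `W j`, taken with weights `v`, is the geometric mean with weights `v ᵥ* W`. With
`v = M i` and `W = M ^ n` this is one step of `(M ^ (n + 1)) i = M i ᵥ* M ^ n`; the weights stay
in the simplex because powers of `M` are row-stochastic, which keeps every normalizer positive.
-/

open MeasureTheory Finset Matrix

section

variable {ι κ Ω : Type*} [Fintype ι] [Fintype κ] [MeasurableSpace Ω] {μ : Measure Ω}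

noncomputable def normalizedGeomMean (μ : Measure Ω) (p : ι → Ω → ℝ) (v : ι → ℝ) (x : Ω) : ℝ :=
  (∏ j, p j x ^ v j) / ∫ y, ∏ j, p j y ^ v j ∂μ

lemma prod_prod_rpow_eq_prod_rpow_vecMul {a : ι → ℝ} (ha : ∀ k, 0 < a k) (v : κ → ℝ)
    (W : Matrix κ ι ℝ) : ∏ j, (∏ k, a k ^ W j k) ^ v j = ∏ k, a k ^ (v ᵥ* W) k :=
  calc ∏ j, (∏ k, a k ^ W j k) ^ v j = ∏ j, ∏ k, a k ^ (W j k * v j) := by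
        refine prod_congr rfl fun j _ => ?_
        rw [← Real.finsetProd_rpow _ _ fun k _ => (Real.rpow_pos_of_pos (ha k) _).le]
        exact prod_congr rfl fun k _ => (Real.rpow_mul (ha k).le _ _).symm
    _ = ∏ k, ∏ j, a k ^ (W j k * v j) := prod_comm
    _ = ∏ k, a k ^ (v ᵥ* W) k := by
        refine prod_congr rfl fun k _ => ?_
        rw [← Real.rpow_sum_of_pos (ha k), vecMul, dotProduct]
        simp only [mul_comm]

lemma normalizedGeomMean_div_const {p : ι → Ω → ℝ} (hp : ∀ j x, 0 ≤ p j x) {c : ι → ℝ}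
    (hc : ∀ j, 0 < c j) (v : ι → ℝ) :
    normalizedGeomMean μ (fun j x => p j x / c j) v = normalizedGeomMean μ p v := by
  have hC : 0 < ∏ j, c j ^ v j := prod_pos fun j _ => Real.rpow_pos_of_pos (hc j) _
  have hscale : ∀ x, ∏ j, (p j x / c j) ^ v j = (∏ j, p j x ^ v j) / ∏ j, c j ^ v j := fun x => by
    rw [← prod_div_distrib]
    exact prod_congr rfl fun j _ => Real.div_rpow (hp j x) (hc j).le _
  ext x
  simp only [normalizedGeomMean, hscale, integral_div]
  exact div_div_div_cancel_right₀ hC.ne' _ _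

lemma normalizedGeomMean_normalizedGeomMean {p : ι → Ω → ℝ} (hp : ∀ j x, 0 < p j x)
    {W : Matrix κ ι ℝ} (hW : ∀ j, 0 < ∫ y, ∏ k, p k y ^ W j k ∂μ) (v : κ → ℝ) :
    normalizedGeomMean μ (fun j => normalizedGeomMean μ p (W j)) v =
      normalizedGeomMean μ p (v ᵥ* W) := by
  have hA : ∀ j x, 0 < ∏ k, p k x ^ W j k := fun j x =>
    prod_pos fun k _ => Real.rpow_pos_of_pos (hp k x) _
  have hmerge : ∀ y, ∏ j, (∏ k, p k y ^ W j k) ^ v j = ∏ k, p k y ^ (v ᵥ* W) k := fun y =>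
    prod_prod_rpow_eq_prod_rpow_vecMul (fun k => hp k y) v W
  refine (normalizedGeomMean_div_const (fun j x => (hA j x).le) hW v).trans ?_
  ext x
  simp only [normalizedGeomMean, hmerge]

lemma normalizedGeomMean_single [DecidableEq ι] (p : ι → Ω → ℝ) (i : ι) (x : Ω) :
    normalizedGeomMean μ p (Pi.single i 1) x = p i x / ∫ y, p i y ∂μ := by
  have hsingle : ∀ y, ∏ j, p j y ^ (Pi.single i 1 : ι → ℝ) j = p i y := fun y => by
    rw [prod_eq_single i (fun j _ hj => by simp [hj]) (by simp)]
    simp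
  simp only [normalizedGeomMean, hsingle]

end

theorem consensus_iterate_eq_geometric_mean_of_matrix_power_general
    {Ω : Type*} [MeasurableSpace Ω] (μ : Measure Ω)
    (N : ℕ)
    (p0 : Fin N → Ω → ℝ)
    (hpos : ∀ j x, 0 < p0 j x)
    (hnorm : ∀ j, ∫ x, p0 j x ∂μ = 1)
    (hint : ∀ v : Fin N → ℝ, (∀ j, 0 ≤ v j) → ∑ j, v j = 1 →
      (0 < ∫ x, ∏ j, p0 j x ^ v j ∂μ) ∧
        Integrable (fun x => ∏ j, p0 j x ^ v j) μ)
    (M : Matrix (Fin N) (Fin N) ℝ)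
    (hMnn : ∀ i j, 0 ≤ M i j)
    (hMrow : ∀ i, ∑ j, M i j = 1)
    (p : ℕ → Fin N → Ω → ℝ)
    (hp0 : p 0 = p0)
    (hstep : ∀ n i x, p (n + 1) i x =
      (∏ j, p n j x ^ M i j) / ∫ y, ∏ j, p n j y ^ M i j ∂μ) :
    ∀ (n : ℕ) (i : Fin N) (x : Ω),
      p n i x =
        (∏ j, p0 j x ^ (M ^ n) i j) / ∫ y, ∏ j, p0 j y ^ (M ^ n) i j ∂μ := by
  have hpow (n : ℕ) : M ^ n ∈ rowStochastic ℝ (Fin N) :=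
    pow_mem (mem_rowStochastic_iff_sum.2 ⟨hMnn, hMrow⟩) n
  have hiter (n : ℕ) : p n = fun i => normalizedGeomMean μ p0 ((M ^ n) i) := by
    induction n with
    | zero =>
      ext i x
      rw [hp0, pow_zero, show (1 : Matrix (Fin N) (Fin N) ℝ) i = Pi.single i 1 from
        funext fun _ => one_eq_pi_single, normalizedGeomMean_single, hnorm, div_one]
    | succ n ih =>
      have hnormalizer (j : Fin N) := (hint _ (fun k => nonneg_of_mem_rowStochastic (hpow n))
        (sum_row_of_mem_rowStochastic (hpow n) j)).1
      ext i x
      rw [hstep, pow_succ', mul_apply_eq_vecMul,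
        ← normalizedGeomMean_normalizedGeomMean hpos hnormalizer, ← ih]
      rfl
  exact fun n i x => congrFun (congrFun (hiter n) i) x

/-- Consensus iterate identity: starting from strictly positive probability densities
`p0 j` and iterating normalized weighted geometric-mean fusion with a row-stochastic
consensus matrix `M`, the `n`-th iterate at node `i` is the normalized weighted
geometric mean of the initial densities with weights `(M ^ n) i j`. -/
theorem consensus_iterate_eq_geometric_mean_of_matrix_power
    {Ω : Type*} [MeasurableSpace Ω] (μ : Measure Ω) [SigmaFinite μ]
    (N : ℕ) (hN : 1 ≤ N)
    (p0 : Fin N → Ω → ℝ)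
    (hmeas : ∀ j, Measurable (p0 j))
    (hpos : ∀ j x, 0 < p0 j x)
    (hnorm : ∀ j, ∫ x, p0 j x ∂μ = 1)
    (hint : ∀ v : Fin N → ℝ, (∀ j, 0 ≤ v j) → ∑ j, v j = 1 →
      (0 < ∫ x, ∏ j, p0 j x ^ v j ∂μ) ∧
        Integrable (fun x => ∏ j, p0 j x ^ v j) μ)
    (M : Matrix (Fin N) (Fin N) ℝ)
    (hMnn : ∀ i j, 0 ≤ M i j)
    (hMrow : ∀ i, ∑ j, M i j = 1)
    (p : ℕ → Fin N → Ω → ℝ)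
    (hp0 : p 0 = p0)
    (hstep : ∀ n i x, p (n + 1) i x =
      (∏ j, p n j x ^ M i j) / ∫ y, ∏ j, p n j y ^ M i j ∂μ) :
    ∀ (n : ℕ) (i : Fin N) (x : Ω),
      p n i x =
        (∏ j, p0 j x ^ (M ^ n) i j) / ∫ y, ∏ j, p0 j y ^ (M ^ n) i j ∂μ :=
  consensus_iterate_eq_geometric_mean_of_matrix_power_general μ N p0 hpos hnorm hint M hMnn hMrow p
    hp0 hstep
end
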